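/- arXiv:2404.06800 — 4 statements merged into one kernel-verified Lean document; each statement's English description precedes it below -/
import Mathlib

section
/- If ‖B_J‖₁ < 1 (strict diagonal dominance by columns), then for every splitting (B₁,...,B_d) of B_J the iteration matrix satisfies ρ(𝓑_{(d)}) < 1. -/
open Matrix Finset

/-- A splitting of `B`: nonzero parts summing to `B` with pairwise vanishing
Hadamard products. -/
def IsSplitting {n d : ℕ} (B : Matrix (Fin n) (Fin n) ℝ)
    (Bs : Fin d → Matrix (Fin n) (Fin n) ℝ) : Prop :=
  (∀ p, Bs p ≠ 0) ∧ (∑ p, Bs p = B) ∧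
    ∀ p q, p ≠ q → Matrix.hadamard (Bs p) (Bs q) = 0

/-- Strictly block-lower-triangular part `𝓛` of the splitting scheme. -/
def blockL {n d : ℕ} (Bs : Fin d → Matrix (Fin n) (Fin n) ℝ) :
    Matrix (Fin d × Fin n) (Fin d × Fin n) ℝ :=
  Matrix.of fun pi qj => if qj.1 < pi.1 then Bs qj.1 pi.2 qj.2 else 0

/-- Block-upper-triangular part `𝓤` of the splitting scheme. -/
def blockU {n d : ℕ} (Bs : Fin d → Matrix (Fin n) (Fin n) ℝ) :
    Matrix (Fin d × Fin n) (Fin d × Fin n) ℝ :=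
  Matrix.of fun pi qj => if pi.1 ≤ qj.1 then Bs qj.1 pi.2 qj.2 else 0

/-- The iteration matrix `𝓑 = (𝓘 - 𝓛)⁻¹ 𝓤` of a splitting. -/
noncomputable def iterMat {n d : ℕ} (Bs : Fin d → Matrix (Fin n) (Fin n) ℝ) :
    Matrix (Fin d × Fin n) (Fin d × Fin n) ℝ :=
  (1 - blockL Bs)⁻¹ * blockU Bs

/-- Complexification of the iteration matrix. -/
noncomputable def iterMatC {n d : ℕ} (Bs : Fin d → Matrix (Fin n) (Fin n) ℝ) :
    Matrix (Fin d × Fin n) (Fin d × Fin n) ℂ :=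
  (iterMat Bs).map Complex.ofReal

/-- Spectral radius of a real matrix, via its complexification. -/
noncomputable def specRad {m : Type*} [Fintype m] [DecidableEq m]
    (M : Matrix m m ℝ) : ENNReal :=
  spectralRadius ℂ (M.map Complex.ofReal)

/-- The maximum absolute column sum norm `‖·‖₁` of a matrix. -/
noncomputable def oneNorm {m k : Type*} [Fintype m] (M : Matrix m k ℝ) : ℝ :=
  ⨆ j, ∑ i, |M i j|

section Aux

variable {n d : ℕ}

/-- entrywise: `|MN| ≤ M'N'` if `|M| ≤ M'`, `|N| ≤ N'`. -/
lemma entry_abs_mul {ι : Type*} [Fintype ι] {M M' N N' : Matrix ι ι ℝ}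
    (hM : ∀ i j, |M i j| ≤ M' i j) (hN : ∀ i j, |N i j| ≤ N' i j) (i j : ι) :
    |(M * N) i j| ≤ (M' * N') i j := by
  rw [Matrix.mul_apply, Matrix.mul_apply]
  refine (Finset.abs_sum_le_sum_abs _ _).trans (Finset.sum_le_sum fun l _ => ?_)
  rw [abs_mul]
  exact mul_le_mul (hM i l) (hN l j) (abs_nonneg _) ((abs_nonneg _).trans (hM i l))

lemma entry_abs_pow {ι : Type*} [Fintype ι] [DecidableEq ι] {M M' : Matrix ι ι ℝ}
    (hM : ∀ i j, |M i j| ≤ M' i j) : ∀ (k : ℕ) (i j : ι), |(M ^ k) i j| ≤ (M' ^ k) i j := by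
  intro k
  induction k with
  | zero =>
    intro i j
    rw [pow_zero, pow_zero]
    rcases eq_or_ne i j with h | h
    · simp [Matrix.one_apply, h]
    · simp [Matrix.one_apply, h]
  | succ k ih =>
    intro i j
    rw [pow_succ, pow_succ]
    exact entry_abs_mul ih hM i j

lemma blockL_pow_support (Cs : Fin d → Matrix (Fin n) (Fin n) ℝ) :
    ∀ (k : ℕ) (pi qj : Fin d × Fin n),
      ((blockL Cs) ^ k) pi qj ≠ 0 → (qj.1 : ℕ) + k ≤ (pi.1 : ℕ) := by
  intro k
  induction k with
  | zero =>
    intro pi qj h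
    rw [pow_zero] at h
    rcases eq_or_ne pi qj with he | he
    · subst he; omega
    · exact absurd (Matrix.one_apply_ne he) h
  | succ k ih =>
    intro pi qj h
    rw [pow_succ, Matrix.mul_apply] at h
    obtain ⟨rk, -, hrk⟩ := Finset.exists_ne_zero_of_sum_ne_zero h
    have h1 : ((blockL Cs) ^ k) pi rk ≠ 0 := fun hz => hrk (by rw [hz, zero_mul])
    have h2 : blockL Cs rk qj ≠ 0 := fun hz => hrk (by rw [hz, mul_zero])
    have hlt : (qj.1 : ℕ) < (rk.1 : ℕ) := by
      by_contra hq
      have hlt' : ¬ qj.1 < rk.1 := fun hc => hq (Fin.lt_def.mp hc)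
      exact h2 (by simp [blockL, hlt'])
    have := ih pi rk h1
    omega

lemma blockL_pow_d (Cs : Fin d → Matrix (Fin n) (Fin n) ℝ) : (blockL Cs) ^ d = 0 := by
  ext pi qj
  rw [Matrix.zero_apply]
  by_contra h
  have := blockL_pow_support Cs d pi qj h
  have := pi.1.isLt
  omega

lemma one_sub_mul_geom {R : Type*} [Ring R] {x : R} {m : ℕ} (h : x ^ m = 0) :
    (1 - x) * ∑ k ∈ Finset.range m, x ^ k = 1 := by
  rw [Finset.mul_sum]
  calc ∑ k ∈ Finset.range m, (1 - x) * x ^ k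
      = ∑ k ∈ Finset.range m, (x ^ k - x ^ (k + 1)) := by
        refine Finset.sum_congr rfl fun k _ => ?_
        rw [sub_mul, one_mul, pow_succ']
    _ = x ^ 0 - x ^ m := Finset.sum_range_sub' (fun k => x ^ k) m
    _ = 1 := by rw [pow_zero, h, sub_zero]

lemma geom_mul_one_sub {R : Type*} [Ring R] {x : R} {m : ℕ} (h : x ^ m = 0) :
    (∑ k ∈ Finset.range m, x ^ k) * (1 - x) = 1 := by
  rw [Finset.sum_mul]
  calc ∑ k ∈ Finset.range m, x ^ k * (1 - x)
      = ∑ k ∈ Finset.range m, (x ^ k - x ^ (k + 1)) := by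
        refine Finset.sum_congr rfl fun k _ => ?_
        rw [mul_sub, mul_one, pow_succ]
    _ = x ^ 0 - x ^ m := Finset.sum_range_sub' (fun k => x ^ k) m
    _ = 1 := by rw [pow_zero, h, sub_zero]

lemma abs_sum_eq_of_pairwise {d : ℕ} (f : Fin d → ℝ)
    (h : ∀ p q, p ≠ q → f p * f q = 0) : |∑ q, f q| = ∑ q, |f q| := by
  by_cases hall : ∀ q, f q = 0
  · simp [hall]
  · push_neg at hall
    obtain ⟨q0, hq0⟩ := hall
    have hz : ∀ q, q ≠ q0 → f q = 0 := fun q hq => by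
      rcases mul_eq_zero.mp (h q q0 hq) with h' | h'
      · exact h'
      · exact absurd h' hq0
    rw [Finset.sum_eq_single q0 (fun q _ hq => hz q hq) (by simp),
      Finset.sum_eq_single q0 (fun q _ hq => by rw [hz q hq, abs_zero]) (by simp)]

end Aux
section Defs

variable {n d : ℕ}

/-- Entrywise absolute values of the splitting pieces. -/
def ABq (Bs : Fin d → Matrix (Fin n) (Fin n) ℝ) (q : Fin d) : Matrix (Fin n) (Fin n) ℝ :=
  Matrix.of fun i j => |Bs q i j|

/-- Entrywise absolute value of the full matrix (sum of pieces). -/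
def Asum (Bs : Fin d → Matrix (Fin n) (Fin n) ℝ) : Matrix (Fin n) (Fin n) ℝ :=
  Matrix.of fun i j => ∑ q, |Bs q i j|

/-- Partial sums of the absolute pieces. -/
def Alek (Bs : Fin d → Matrix (Fin n) (Fin n) ℝ) (q : Fin d) : Matrix (Fin n) (Fin n) ℝ :=
  Matrix.of fun i k => ∑ r, if r ≤ q then |Bs r i k| else 0

/-- Auxiliary `n × n` blocks of the comparison matrix. -/
noncomputable def Gmat (Bs : Fin d → Matrix (Fin n) (Fin n) ℝ)
    (Ai : Matrix (Fin n) (Fin n) ℝ) (q : Fin d) : Matrix (Fin n) (Fin n) ℝ :=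
  Ai * Alek Bs q * ABq Bs q

/-- Nonnegative part of the comparison matrix. -/
noncomputable def Wmat (Bs : Fin d → Matrix (Fin n) (Fin n) ℝ)
    (Ai : Matrix (Fin n) (Fin n) ℝ) : Matrix (Fin d × Fin n) (Fin d × Fin n) ℝ :=
  Matrix.of fun pi qj =>
    Gmat Bs Ai qj.1 pi.2 qj.2 + (if pi.1 ≤ qj.1 then |Bs qj.1 pi.2 qj.2| else 0)

/-- The comparison matrix `Z = (I - 𝓛' - 𝓤')⁻¹ (I - 𝓛')`, written explicitly. -/
noncomputable def Zmat (Bs : Fin d → Matrix (Fin n) (Fin n) ℝ)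
    (Ai : Matrix (Fin n) (Fin n) ℝ) : Matrix (Fin d × Fin n) (Fin d × Fin n) ℝ :=
  1 + Wmat Bs Ai

/-- Iteration matrix of the absolute-value splitting. -/
noncomputable def Hp (Bs : Fin d → Matrix (Fin n) (Fin n) ℝ) :
    Matrix (Fin d × Fin n) (Fin d × Fin n) ℝ :=
  (∑ k ∈ Finset.range d, (blockL (ABq Bs)) ^ k) * blockU (ABq Bs)

end Defs

section KeyLemmas

variable {n d : ℕ} (Bs : Fin d → Matrix (Fin n) (Fin n) ℝ) (Ai : Matrix (Fin n) (Fin n) ℝ)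

lemma entry_mul_nonneg {ι κ ρ : Type*} [Fintype κ] {M : Matrix ι κ ℝ} {N : Matrix κ ρ ℝ}
    (hM : ∀ i j, 0 ≤ M i j) (hN : ∀ i j, 0 ≤ N i j) (i : ι) (j : ρ) :
    0 ≤ (M * N) i j := by
  rw [Matrix.mul_apply]
  exact Finset.sum_nonneg fun l _ => mul_nonneg (hM i l) (hN l j)

lemma Alek_nonneg (q : Fin d) (i k : Fin n) : 0 ≤ Alek Bs q i k := by
  rw [Alek, Matrix.of_apply]
  refine Finset.sum_nonneg fun r _ => ?_
  split <;> simp [abs_nonneg]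

lemma Gmat_nonneg (hAi : ∀ i j, 0 ≤ Ai i j) (q : Fin d) (i j : Fin n) :
    0 ≤ Gmat Bs Ai q i j :=
  entry_mul_nonneg (entry_mul_nonneg hAi (Alek_nonneg Bs q)) (fun a b => abs_nonneg _) i j

lemma Wmat_nonneg (hAi : ∀ i j, 0 ≤ Ai i j) (pi qj : Fin d × Fin n) :
    0 ≤ Wmat Bs Ai pi qj := by
  refine add_nonneg (Gmat_nonneg Bs Ai hAi _ _ _) ?_
  split <;> simp [abs_nonneg]

lemma Zmat_nonneg (hAi : ∀ i j, 0 ≤ Ai i j) (pi qj : Fin d × Fin n) :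
    0 ≤ Zmat Bs Ai pi qj := by
  rw [Zmat, Matrix.add_apply]
  refine add_nonneg ?_ (Wmat_nonneg Bs Ai hAi pi qj)
  rw [Matrix.one_apply]
  split <;> norm_num

/-- The key algebraic identity `(𝓛' + 𝓤') Z = Z - 1 + 𝓛'`. -/
lemma key1 (hAi : Asum Bs * Ai = Ai - 1) :
    (blockL (ABq Bs) + blockU (ABq Bs)) * Zmat Bs Ai = Zmat Bs Ai - 1 + blockL (ABq Bs) := by
  ext pis qjs
  obtain ⟨p, i⟩ := pis
  obtain ⟨q, j⟩ := qjs
  have hT : ∀ rk : Fin d × Fin n,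
      (blockL (ABq Bs) + blockU (ABq Bs)) (p, i) rk = |Bs rk.1 i rk.2| := by
    intro rk
    rcases lt_or_ge rk.1 p with h | h
    · simp [blockL, blockU, ABq, Matrix.add_apply, h, not_le.mpr h]
    · simp [blockL, blockU, ABq, Matrix.add_apply, h, not_lt.mpr h]
  have hZapp : ∀ rk : Fin d × Fin n,
      Zmat Bs Ai rk (q, j) = (if rk = (q, j) then (1:ℝ) else 0)
        + (Gmat Bs Ai q rk.2 j + (if rk.1 ≤ q then |Bs q rk.2 j| else 0)) := by
    intro rk
    rw [Zmat, Matrix.add_apply, Matrix.one_apply, Wmat]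
    rfl
  rw [Matrix.mul_apply]
  have hsplit3 : ∑ rk : Fin d × Fin n,
      (blockL (ABq Bs) + blockU (ABq Bs)) (p, i) rk * Zmat Bs Ai rk (q, j)
      = (∑ rk : Fin d × Fin n, |Bs rk.1 i rk.2| * (if rk = (q, j) then (1:ℝ) else 0))
        + ((∑ rk : Fin d × Fin n, |Bs rk.1 i rk.2| * Gmat Bs Ai q rk.2 j)
        + (∑ rk : Fin d × Fin n, |Bs rk.1 i rk.2| * (if rk.1 ≤ q then |Bs q rk.2 j| else 0))) := by
    rw [← Finset.sum_add_distrib, ← Finset.sum_add_distrib]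
    refine Finset.sum_congr rfl fun rk _ => ?_
    rw [hT rk, hZapp rk, mul_add, mul_add]
  rw [hsplit3]
  have hS1 : (∑ rk : Fin d × Fin n, |Bs rk.1 i rk.2| * (if rk = (q, j) then (1:ℝ) else 0))
      = |Bs q i j| := by
    simp only [mul_ite, mul_one, mul_zero]
    rw [Finset.sum_ite_eq' Finset.univ (q, j) (fun rk => |Bs rk.1 i rk.2|)]
    simp
  have hS2 : (∑ rk : Fin d × Fin n, |Bs rk.1 i rk.2| * Gmat Bs Ai q rk.2 j)
      = Gmat Bs Ai q i j - (Alek Bs q * ABq Bs q) i j := by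
    have e1 : (∑ rk : Fin d × Fin n, |Bs rk.1 i rk.2| * Gmat Bs Ai q rk.2 j)
        = (Asum Bs * Gmat Bs Ai q) i j := by
      rw [Fintype.sum_prod_type, Finset.sum_comm, Matrix.mul_apply]
      refine Finset.sum_congr rfl fun k _ => ?_
      rw [Asum, Matrix.of_apply, Finset.sum_mul]
    have e2 : Asum Bs * Gmat Bs Ai q = Gmat Bs Ai q - Alek Bs q * ABq Bs q := by
      rw [Gmat, ← mul_assoc, ← mul_assoc, hAi, sub_mul, sub_mul, one_mul]
    rw [e1, e2, Matrix.sub_apply]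
  have hS3 : (∑ rk : Fin d × Fin n, |Bs rk.1 i rk.2| * (if rk.1 ≤ q then |Bs q rk.2 j| else 0))
      = (Alek Bs q * ABq Bs q) i j := by
    rw [Fintype.sum_prod_type, Finset.sum_comm, Matrix.mul_apply]
    refine Finset.sum_congr rfl fun k _ => ?_
    rw [Alek, Matrix.of_apply, Finset.sum_mul, ABq, Matrix.of_apply]
    refine Finset.sum_congr rfl fun r _ => ?_
    rcases le_or_gt r q with h | h
    · simp [h]
    · simp [not_le.mpr h]
  rw [hS1, hS2, hS3]
  have hR : (Zmat Bs Ai - 1 + blockL (ABq Bs)) (p, i) (q, j)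
      = Gmat Bs Ai q i j + (if p ≤ q then |Bs q i j| else 0) + (if q < p then |Bs q i j| else 0) := by
    rw [Matrix.add_apply, Matrix.sub_apply, Zmat, Matrix.add_apply, Wmat]
    simp only [blockL, ABq, Matrix.of_apply]
    ring
  rw [hR]
  rcases le_or_gt p q with h | h
  · rw [if_pos h, if_neg (not_lt.mpr h)]; ring
  · rw [if_neg (not_le.mpr h), if_pos h]; ring

/-- Fixed point equation `Z = 1 + 𝓑' Z`. -/
lemma Zfix (hAi : Asum Bs * Ai = Ai - 1) : Zmat Bs Ai = 1 + Hp Bs * Zmat Bs Ai := by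
  have key := key1 Bs Ai hAi
  have hgeom : (∑ k ∈ Finset.range d, (blockL (ABq Bs)) ^ k) * (1 - blockL (ABq Bs)) = 1 :=
    geom_mul_one_sub (blockL_pow_d _)
  rw [add_mul] at key
  have hUZ : blockU (ABq Bs) * Zmat Bs Ai
      = (1 - blockL (ABq Bs)) * (Zmat Bs Ai - 1) := by
    have h2 : blockU (ABq Bs) * Zmat Bs Ai
        = Zmat Bs Ai - 1 + blockL (ABq Bs) - blockL (ABq Bs) * Zmat Bs Ai := by
      rw [← key]; abel
    rw [h2, sub_mul, one_mul, mul_sub, mul_one]; abel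
  have hHZ : Hp Bs * Zmat Bs Ai = Zmat Bs Ai - 1 := by
    rw [Hp, mul_assoc, hUZ, ← mul_assoc, hgeom, one_mul]
  rw [hHZ]; abel

/-- Partial sums of powers of `𝓑'` are bounded by `Z`, entrywise. -/
lemma partial_sum_le (hAi : Asum Bs * Ai = Ai - 1) (hAin : ∀ i j, 0 ≤ Ai i j)
    (hHp : ∀ pi qj, 0 ≤ Hp Bs pi qj) :
    ∀ (M : ℕ) (pi qj : Fin d × Fin n),
      (∑ m ∈ Finset.range M, (Hp Bs) ^ m) pi qj ≤ Zmat Bs Ai pi qj := by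
  intro M
  induction M with
  | zero =>
    intro pi qj
    simp only [Finset.range_zero, Finset.sum_empty, Matrix.zero_apply]
    exact Zmat_nonneg Bs Ai hAin pi qj
  | succ M ih =>
    intro pi qj
    rw [geom_sum_succ, Matrix.add_apply, Matrix.mul_apply]
    have hle : ∑ rk : Fin d × Fin n, Hp Bs pi rk * (∑ m ∈ Finset.range M, (Hp Bs) ^ m) rk qj
        ≤ ∑ rk : Fin d × Fin n, Hp Bs pi rk * Zmat Bs Ai rk qj :=
      Finset.sum_le_sum fun rk _ => mul_le_mul_of_nonneg_left (ih rk qj) (hHp pi rk)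
    have h2 : (Hp Bs * Zmat Bs Ai) pi qj + (1 : Matrix (Fin d × Fin n) (Fin d × Fin n) ℝ) pi qj
        = Zmat Bs Ai pi qj := by
      conv_rhs => rw [Zfix Bs Ai hAi]
      rw [Matrix.add_apply]
      ring
    calc (∑ rk : Fin d × Fin n, Hp Bs pi rk * (∑ m ∈ Finset.range M, (Hp Bs) ^ m) rk qj)
          + (1 : Matrix (Fin d × Fin n) (Fin d × Fin n) ℝ) pi qj
        ≤ (∑ rk : Fin d × Fin n, Hp Bs pi rk * Zmat Bs Ai rk qj)
          + (1 : Matrix (Fin d × Fin n) (Fin d × Fin n) ℝ) pi qj := by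
          exact add_le_add hle le_rfl
      _ = Zmat Bs Ai pi qj := by rw [← Matrix.mul_apply]; exact h2

end KeyLemmas
/-- Strict diagonal dominance by columns (`‖B_J‖₁ < 1`) implies convergence of
every splitting method: `ρ(𝓑_{(d)}) < 1`. -/
theorem convergence_column_dominance (n d : ℕ) (BJ : Matrix (Fin n) (Fin n) ℝ)
    (Bs : Fin d → Matrix (Fin n) (Fin n) ℝ)
    (hsplit : IsSplitting BJ Bs)
    (hdom : oneNorm BJ < 1) :
    specRad (iterMat Bs) < 1 := by
  obtain ⟨-, hBsum, hHad⟩ := hsplit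
  by_cases hne : Nonempty (Fin d × Fin n)
  swap
  · rw [not_nonempty_iff] at hne
    have hsub : Subsingleton (Matrix (Fin d × Fin n) (Fin d × Fin n) ℂ) := by
      constructor
      intro a b
      ext pi qj
      exact (hne.false pi).elim
    have hspec : spectrum ℂ ((iterMat Bs).map Complex.ofReal) = ∅ := by
      ext z
      simp only [Set.mem_empty_iff_false, iff_false]
      intro hz
      exact spectrum.mem_iff.mp hz (@isUnit_of_subsingleton _ _ hsub _)
    show spectralRadius ℂ ((iterMat Bs).map Complex.ofReal) < 1
    unfold spectralRadius
    rw [hspec]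
    simpa using ENNReal.zero_lt_one
  · obtain ⟨⟨p0, i0⟩⟩ := id hne
    set β := oneNorm BJ with hβdef
    have hβ1 : β < 1 := hdom
    have hcols : ∀ j, ∑ i, |BJ i j| ≤ β := fun j =>
      le_ciSup (f := fun j => ∑ i, |BJ i j|) (Set.Finite.bddAbove (Set.finite_range _)) j
    have hβ0 : 0 ≤ β :=
      le_trans (Finset.sum_nonneg fun i _ => abs_nonneg _) (hcols i0)
    have hAeq : ∀ i j, Asum Bs i j = |BJ i j| := by
      intro i j
      have h1 : BJ i j = ∑ q, Bs q i j := by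
        rw [← hBsum, Matrix.sum_apply]
      have h2 : ∀ p q, p ≠ q → Bs p i j * Bs q i j = 0 := by
        intro p q hpq
        have h3 := congrFun (congrFun (hHad p q hpq) i) j
        simpa [Matrix.hadamard] using h3
      rw [Asum, Matrix.of_apply, ← abs_sum_eq_of_pairwise _ h2, ← h1]
    have hA0 : ∀ i j, 0 ≤ Asum Bs i j := fun i j => by
      rw [hAeq]; exact abs_nonneg _
    have hAcol : ∀ j, ∑ i, Asum Bs i j ≤ β := by
      intro j
      calc ∑ i, Asum Bs i j = ∑ i, |BJ i j| := Finset.sum_congr rfl fun i _ => hAeq i j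
        _ ≤ β := hcols j
    have habsA : ∀ i j, |Asum Bs i j| ≤ Asum Bs i j := fun i j =>
      le_of_eq (abs_of_nonneg (hA0 i j))
    have hApow0 : ∀ (k : ℕ) (i j : Fin n), 0 ≤ ((Asum Bs) ^ k) i j := fun k i j =>
      (abs_nonneg _).trans (entry_abs_pow habsA k i j)
    have hcolpow : ∀ (k : ℕ) (j : Fin n), ∑ i, ((Asum Bs) ^ k) i j ≤ β ^ k := by
      intro k
      induction k with
      | zero =>
        intro j
        rw [pow_zero, pow_zero]
        have h1 : ∑ i, (1 : Matrix (Fin n) (Fin n) ℝ) i j = 1 := by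
          simp [Matrix.one_apply]
        rw [h1]
      | succ k ih =>
        intro j
        rw [pow_succ, pow_succ]
        calc ∑ i, ((Asum Bs) ^ k * Asum Bs) i j
            = ∑ i, ∑ l, ((Asum Bs) ^ k) i l * Asum Bs l j :=
              Finset.sum_congr rfl fun i _ => Matrix.mul_apply
          _ = ∑ l, (∑ i, ((Asum Bs) ^ k) i l) * Asum Bs l j := by
              rw [Finset.sum_comm]
              exact Finset.sum_congr rfl fun l _ => (Finset.sum_mul _ _ _).symm
          _ ≤ ∑ l, β ^ k * Asum Bs l j :=
              Finset.sum_le_sum fun l _ => mul_le_mul_of_nonneg_right (ih l) (hA0 l j)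
          _ = β ^ k * ∑ l, Asum Bs l j := (Finset.mul_sum _ _ _).symm
          _ ≤ β ^ k * β := mul_le_mul_of_nonneg_left (hAcol j) (pow_nonneg hβ0 k)
    have hentry : ∀ (k : ℕ) (i j : Fin n), ((Asum Bs) ^ k) i j ≤ β ^ k := fun k i j =>
      le_trans (Finset.single_le_sum (fun i' _ => hApow0 k i' j) (Finset.mem_univ i))
        (hcolpow k j)
    have hsumm : ∀ i j : Fin n, Summable fun k : ℕ => ((Asum Bs) ^ k) i j := fun i j =>
      Summable.of_nonneg_of_le (fun k => hApow0 k i j) (fun k => hentry k i j)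
        (summable_geometric_of_lt_one hβ0 hβ1)
    set Ai : Matrix (Fin n) (Fin n) ℝ :=
      Matrix.of (fun i j => ∑' k : ℕ, ((Asum Bs) ^ k) i j) with hAidef
    have hAiapp : ∀ i j, Ai i j = ∑' k : ℕ, ((Asum Bs) ^ k) i j := fun i j => rfl
    have hAin : ∀ i j, 0 ≤ Ai i j := fun i j => tsum_nonneg fun k => hApow0 k i j
    have hAiEq : Asum Bs * Ai = Ai - 1 := by
      ext i j
      rw [Matrix.mul_apply, Matrix.sub_apply]
      calc ∑ l, Asum Bs i l * Ai l j
          = ∑ l, ∑' k : ℕ, Asum Bs i l * ((Asum Bs) ^ k) l j :=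
            Finset.sum_congr rfl fun l _ => by rw [hAiapp, ← tsum_mul_left]
        _ = ∑' k : ℕ, ∑ l, Asum Bs i l * ((Asum Bs) ^ k) l j :=
            (Summable.tsum_finsetSum fun l _ => (hsumm l j).mul_left _).symm
        _ = ∑' k : ℕ, ((Asum Bs) ^ (k + 1)) i j := by
            refine tsum_congr fun k => ?_
            rw [← Matrix.mul_apply, ← pow_succ']
        _ = Ai i j - (1 : Matrix (Fin n) (Fin n) ℝ) i j := by
            have h0 := Summable.tsum_eq_zero_add (hsumm i j)
            have h1 : ((Asum Bs) ^ 0) i j = (1 : Matrix (Fin n) (Fin n) ℝ) i j := by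
              rw [pow_zero]
            rw [hAiapp, h0, h1]
            ring
    have hiter : iterMat Bs = (∑ k ∈ Finset.range d, (blockL Bs) ^ k) * blockU Bs := by
      rw [iterMat, Matrix.inv_eq_right_inv (one_sub_mul_geom (blockL_pow_d Bs))]
    have hLabs : ∀ pi qj : Fin d × Fin n, |blockL Bs pi qj| ≤ blockL (ABq Bs) pi qj := by
      intro pi qj
      by_cases h : qj.1 < pi.1 <;> simp [blockL, ABq, h]
    have hUabs : ∀ pi qj : Fin d × Fin n, |blockU Bs pi qj| ≤ blockU (ABq Bs) pi qj := by
      intro pi qj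
      by_cases h : pi.1 ≤ qj.1 <;> simp [blockU, ABq, h]
    have hHpabs : ∀ pi qj : Fin d × Fin n, |iterMat Bs pi qj| ≤ Hp Bs pi qj := by
      intro pi qj
      rw [hiter, Hp]
      refine entry_abs_mul (fun i j => ?_) hUabs pi qj
      rw [Matrix.sum_apply, Matrix.sum_apply]
      refine (Finset.abs_sum_le_sum_abs _ _).trans (Finset.sum_le_sum fun k _ => ?_)
      exact entry_abs_pow hLabs k i j
    have hHp0 : ∀ pi qj : Fin d × Fin n, 0 ≤ Hp Bs pi qj := fun pi qj =>
      (abs_nonneg _).trans (hHpabs pi qj)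
    have hpowabs : ∀ (m : ℕ) (pi qj : Fin d × Fin n),
        |((iterMat Bs) ^ m) pi qj| ≤ ((Hp Bs) ^ m) pi qj :=
      fun m => entry_abs_pow hHpabs m
    set K : ℝ := ∑ pi : Fin d × Fin n, ∑ qj : Fin d × Fin n, Zmat Bs Ai pi qj with hKdef
    have hZ0 := Zmat_nonneg Bs Ai hAin
    have hrowK : ∀ k0 : Fin d × Fin n, ∑ qj, Zmat Bs Ai k0 qj ≤ K := fun k0 =>
      Finset.single_le_sum (f := fun pi => ∑ qj, Zmat Bs Ai pi qj)
        (fun pi _ => Finset.sum_nonneg fun qj _ => hZ0 pi qj) (Finset.mem_univ k0)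
    have hK1 : (1 : ℝ) ≤ K := by
      have hd1 : (1 : ℝ) ≤ Zmat Bs Ai (p0, i0) (p0, i0) := by
        rw [Zmat, Matrix.add_apply, Matrix.one_apply_eq]
        have := Wmat_nonneg Bs Ai hAin (p0, i0) (p0, i0)
        linarith
      have hd2 : Zmat Bs Ai (p0, i0) (p0, i0) ≤ ∑ qj, Zmat Bs Ai (p0, i0) qj :=
        Finset.single_le_sum (fun qj _ => hZ0 _ qj) (Finset.mem_univ _)
      exact hd1.trans (hd2.trans (hrowK _))
    set θ : ℝ := K / (K + 1) with hθdef
    have hKpos : (0 : ℝ) < K + 1 := by linarith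
    have hθ1 : θ < 1 := by
      rw [hθdef, div_lt_one hKpos]; linarith
    have hb : ∀ z ∈ spectrum ℂ ((iterMat Bs).map Complex.ofReal), ‖z‖ ≤ θ := by
      intro z hz
      have hnu : ¬IsUnit (algebraMap ℂ (Matrix (Fin d × Fin n) (Fin d × Fin n) ℂ) z
          - (iterMat Bs).map Complex.ofReal) := spectrum.mem_iff.mp hz
      have hdet : (algebraMap ℂ (Matrix (Fin d × Fin n) (Fin d × Fin n) ℂ) z
          - (iterMat Bs).map Complex.ofReal).det = 0 := by
        by_contra h
        exact hnu ((Matrix.isUnit_iff_isUnit_det _).mpr (isUnit_iff_ne_zero.mpr h))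
      obtain ⟨v, hv0, hv⟩ := Matrix.exists_mulVec_eq_zero_iff.mpr hdet
      have hev : (iterMat Bs).map Complex.ofReal *ᵥ v = z • v := by
        rw [Algebra.algebraMap_eq_smul_one, Matrix.sub_mulVec, Matrix.smul_mulVec,
          Matrix.one_mulVec] at hv
        exact (sub_eq_zero.mp hv).symm
      have hmappow : ∀ m : ℕ, ((iterMat Bs).map Complex.ofReal) ^ m
          = ((iterMat Bs) ^ m).map Complex.ofReal := by
        intro m
        induction m with
        | zero =>
          rw [pow_zero, pow_zero]
          exact (Matrix.map_one _ Complex.ofReal_zero Complex.ofReal_one).symm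
        | succ m ih =>
          rw [pow_succ, pow_succ, ih]
          exact (Matrix.map_mul (f := Complex.ofRealHom)).symm
      have hpowv : ∀ m : ℕ, (((iterMat Bs).map Complex.ofReal) ^ m) *ᵥ v = z ^ m • v := by
        intro m
        induction m with
        | zero => rw [pow_zero, pow_zero, Matrix.one_mulVec, one_smul]
        | succ m ih =>
          rw [pow_succ, ← Matrix.mulVec_mulVec, hev, Matrix.mulVec_smul, ih, smul_smul,
            ← pow_succ']
      obtain ⟨k0, hk0⟩ := Finite.exists_max fun j : Fin d × Fin n => ‖v j‖
      have hvk : 0 < ‖v k0‖ := by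
        rcases (norm_nonneg (v k0)).lt_or_eq with h | h
        · exact h
        · exfalso
          apply hv0
          funext j
          have h5 := hk0 j
          rw [← h] at h5
          exact norm_le_zero_iff.mp h5
      set t : ℝ := ‖z‖ with htdef
      have hgs : ∀ M : ℕ, ∑ m ∈ Finset.range M, t ^ m ≤ K := by
        intro M
        have hm : ∀ m : ℕ, t ^ m ≤ ∑ qj, ((Hp Bs) ^ m) k0 qj := by
          intro m
          have h1 : t ^ m * ‖v k0‖ = ‖(z ^ m • v) k0‖ := by
            rw [Pi.smul_apply, smul_eq_mul, norm_mul, norm_pow]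
          have h2 : (z ^ m • v) k0 = (((iterMat Bs) ^ m).map Complex.ofReal *ᵥ v) k0 := by
            rw [← hpowv m, hmappow m]
          have h3 : ‖(((iterMat Bs) ^ m).map Complex.ofReal *ᵥ v) k0‖
              ≤ ∑ qj, ((Hp Bs) ^ m) k0 qj * ‖v k0‖ := by
            have h4 : (((iterMat Bs) ^ m).map Complex.ofReal *ᵥ v) k0
                = ∑ qj, (((iterMat Bs) ^ m) k0 qj : ℂ) * v qj := by
              simp [Matrix.mulVec, dotProduct, Matrix.map_apply]
            rw [h4]
            refine (norm_sum_le _ _).trans (Finset.sum_le_sum fun qj _ => ?_)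
            rw [norm_mul, Complex.norm_real, Real.norm_eq_abs]
            exact mul_le_mul (hpowabs m k0 qj) (hk0 qj) (norm_nonneg _)
              ((abs_nonneg _).trans (hpowabs m k0 qj))
          have h5 : t ^ m * ‖v k0‖ ≤ (∑ qj, ((Hp Bs) ^ m) k0 qj) * ‖v k0‖ := by
            rw [h1, h2, Finset.sum_mul]
            exact h3
          exact le_of_mul_le_mul_right h5 hvk
        calc ∑ m ∈ Finset.range M, t ^ m
            ≤ ∑ m ∈ Finset.range M, ∑ qj, ((Hp Bs) ^ m) k0 qj :=
              Finset.sum_le_sum fun m _ => hm m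
          _ = ∑ qj, (∑ m ∈ Finset.range M, (Hp Bs) ^ m) k0 qj := by
              rw [Finset.sum_comm]
              exact Finset.sum_congr rfl fun qj _ => (Matrix.sum_apply _ _ _ _).symm
          _ ≤ ∑ qj, Zmat Bs Ai k0 qj :=
              Finset.sum_le_sum fun qj _ => partial_sum_le Bs Ai hAiEq hAin hHp0 M k0 qj
          _ ≤ K := hrowK k0
      by_contra hcon
      push_neg at hcon
      rw [hθdef] at hcon
      rcases lt_or_ge t 1 with ht1 | ht1
      · obtain ⟨M, hM⟩ := exists_pow_lt_of_lt_one
          (show (0 : ℝ) < 1 / (K + 1) by positivity) ht1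
        have hge := hgs M
        have hgeo : ∑ m ∈ Finset.range M, t ^ m = (1 - t ^ M) / (1 - t) := by
          rw [geom_sum_eq (ne_of_lt ht1), ← neg_div_neg_eq]
          congr 1 <;> ring
        have htpos : 0 < 1 - t := by linarith
        have h7 : 1 - K / (K + 1) = 1 / (K + 1) := by field_simp; ring
        have e1 : 1 - t < 1 / (K + 1) := by linarith
        have e2 : K * (1 - t) < K * (1 / (K + 1)) :=
          mul_lt_mul_of_pos_left e1 (by linarith)
        have e3 : K * (1 / (K + 1)) + 1 / (K + 1) = 1 := by field_simp
        have h6 : K < (1 - t ^ M) / (1 - t) := by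
          rw [lt_div_iff₀ htpos]
          linarith
        rw [hgeo] at hge
        linarith
      · set M := Nat.ceil K + 1 with hMdef
        have hge := hgs M
        have hsum1 : (M : ℝ) ≤ ∑ m ∈ Finset.range M, t ^ m := by
          have h1 : ∀ m ∈ Finset.range M, (1 : ℝ) ≤ t ^ m := fun m _ => by
            calc (1 : ℝ) = 1 ^ m := (one_pow m).symm
              _ ≤ t ^ m := pow_le_pow_left₀ zero_le_one ht1 m
          calc (M : ℝ) = (Finset.range M).card • (1 : ℝ) := by simp
            _ ≤ ∑ m ∈ Finset.range M, t ^ m := Finset.card_nsmul_le_sum _ _ _ h1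
        have hcK : K < (M : ℝ) := by
          have := Nat.le_ceil K
          rw [hMdef]
          push_cast
          linarith
        linarith
    show spectralRadius ℂ ((iterMat Bs).map Complex.ofReal) < 1
    unfold spectralRadius
    refine lt_of_le_of_lt (iSup₂_le fun z hz => ?_) (ENNReal.ofReal_lt_one.mpr hθ1)
    rw [← enorm_eq_nnnorm, ← ofReal_norm]
    exact ENNReal.ofReal_le_ofReal (hb z hz)
end

section
/- Let B_J = L + U where L is strictly lower triangular and U strictly upper triangular, with L ≠ O, U ≠ O, and ρ(B_J) > 0. Then UL ≠ O and LU ≠ O. -/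
open Matrix

/-- Binomial-type expansion when `b * a = 0`. -/
lemma add_pow_of_mul_eq_zero {R : Type*} [Ring R] {a b : R} (hba : b * a = 0) :
    ∀ m : ℕ, (a + b) ^ m = ∑ h ∈ Finset.range (m + 1), a ^ h * b ^ (m - h) := by
  have hba' : ∀ h : ℕ, 1 ≤ h → b * a ^ h = 0 := by
    intro h hh
    obtain ⟨k, rfl⟩ := Nat.exists_eq_add_of_le hh
    rw [pow_add, pow_one, ← mul_assoc, hba, zero_mul]
  intro m
  induction m with
  | zero => simp
  | succ m ih =>
    rw [pow_succ, ih, Finset.sum_mul]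
    have hsplit : ∀ h ∈ Finset.range (m + 1),
        a ^ h * b ^ (m - h) * (a + b)
          = (if h = m then a ^ (h + 1) * b ^ (m - h) else 0)
            + a ^ h * b ^ (m + 1 - h) := by
      intro h hh
      rw [Finset.mem_range, Nat.lt_succ_iff] at hh
      rcases eq_or_lt_of_le hh with rfl | hlt
      · simp [mul_add, pow_succ, mul_assoc]
      · have : b ^ (m - h) * a = 0 := by
          obtain ⟨k, hk⟩ : ∃ k, m - h = k + 1 := ⟨m - h - 1, by omega⟩
          rw [hk, pow_succ, mul_assoc, hba, mul_zero]
        have h2 : m + 1 - h = (m - h) + 1 := by omega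
        rw [mul_add, mul_assoc, this, mul_zero, zero_add, if_neg hlt.ne, zero_add,
          h2, pow_succ, ← mul_assoc]
    rw [Finset.sum_congr rfl hsplit, Finset.sum_add_distrib,
      Finset.sum_ite_eq' (Finset.range (m + 1)) m (fun h => a ^ (h + 1) * b ^ (m - h))]
    simp only [Finset.mem_range, Nat.lt_succ_iff, le_refl, if_true, Nat.sub_self, pow_zero,
      mul_one]
    rw [Finset.sum_range_succ (fun x => a ^ x * b ^ (m + 1 - x)) (m + 1)]
    have hm1 : m + 1 - (m + 1) = 0 := by omega
    rw [hm1, pow_zero, mul_one, add_comm]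

lemma nilpotent_add_of_mul_eq_zero {R : Type*} [Ring R] {a b : R} {p : ℕ}
    (ha : a ^ p = 0) (hb : b ^ p = 0) (hba : b * a = 0) :
    (a + b) ^ (2 * p) = 0 := by
  rw [add_pow_of_mul_eq_zero hba]
  refine Finset.sum_eq_zero fun h hh => ?_
  rw [Finset.mem_range] at hh
  rcases le_or_gt p h with hph | hph
  · obtain ⟨k, rfl⟩ := Nat.exists_eq_add_of_le hph
    rw [pow_add, ha, zero_mul, zero_mul]
  · have : p ≤ 2 * p - h := by omega
    obtain ⟨k, hk⟩ := Nat.exists_eq_add_of_le this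
    rw [hk, pow_add, hb, zero_mul, mul_zero]

/-- Strictly lower triangular matrices are nilpotent with index `≤ n`. -/
lemma strictLower_pow_eq_zero {n : ℕ} {R : Type*} [Ring R] {L : Matrix (Fin n) (Fin n) R}
    (hL : ∀ i j : Fin n, i ≤ j → L i j = 0) : L ^ n = 0 := by
  have key : ∀ k : ℕ, ∀ i j : Fin n, (i : ℕ) < (j : ℕ) + k → (L ^ k) i j = 0 := by
    intro k
    induction k with
    | zero =>
      intro i j hij
      rw [pow_zero]
      have : i ≠ j := by
        intro h; subst h; omega
      simp [Matrix.one_apply_ne this]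
    | succ k ih =>
      intro i j hij
      rw [pow_succ']
      rw [Matrix.mul_apply]
      refine Finset.sum_eq_zero fun l _ => ?_
      rcases le_or_gt i l with hle | hlt
      · rw [hL i l hle, zero_mul]
      · have : (l : ℕ) < (j : ℕ) + k := by
          have : (l : ℕ) < (i : ℕ) := hlt
          omega
        rw [ih l j this, mul_zero]
  ext i j
  have : (i : ℕ) < (j : ℕ) + n := by omega
  simpa using key n i j this

lemma strictUpper_pow_eq_zero {n : ℕ} {R : Type*} [CommRing R] {U : Matrix (Fin n) (Fin n) R}
    (hU : ∀ i j : Fin n, j ≤ i → U i j = 0) : U ^ n = 0 := by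
  have hT : ∀ i j : Fin n, i ≤ j → Uᵀ i j = 0 := fun i j hij => hU j i hij
  have := strictLower_pow_eq_zero hT
  have h2 : (U ^ n)ᵀ = 0 := by rw [Matrix.transpose_pow]; exact this
  calc U ^ n = ((U ^ n)ᵀ)ᵀ := by rw [Matrix.transpose_transpose]
    _ = 0 := by rw [h2, Matrix.transpose_zero]

/-- spectral radius of a nilpotent element over ℂ is zero. -/
lemma spectralRadius_eq_zero_of_pow_eq_zero {A : Type*} [Ring A] [Algebra ℂ A]
    {a : A} {m : ℕ} (ha : a ^ m = 0) : spectralRadius ℂ a = 0 := by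
  have hsub : spectrum ℂ a ⊆ {0} := by
    intro k hk
    have h1 : k ^ m ∈ spectrum ℂ (a ^ m) :=
      spectrum.pow_image_subset a m ⟨k, hk, rfl⟩
    rw [ha] at h1
    have h0 : spectrum ℂ (0 : A) ⊆ {0} := by
      rcases subsingleton_or_nontrivial A with hs | hs
      · have : spectrum ℂ (0 : A) = ∅ := by
          ext x
          simp only [Set.mem_empty_iff_false, iff_false]
          intro hx
          exact (spectrum.mem_iff.mp hx) (isUnit_of_subsingleton _)
        rw [this]; exact Set.empty_subset _
      · rw [spectrum.zero_eq]
    have : k ^ m = 0 := h0 h1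
    have : k = 0 := (pow_eq_zero_iff'.mp this).1
    simp [this]
  rw [spectralRadius]
  refine le_antisymm ?_ zero_le
  refine iSup₂_le fun k hk => ?_
  have : k = 0 := hsub hk
  simp [this]

/-- If `B_J = L + U` with `L ≠ O` strictly lower triangular, `U ≠ O` strictly
upper triangular, and `ρ(B_J) > 0`, then `UL ≠ O` and `LU ≠ O`. -/
theorem UL_and_LU_nonzero (n : ℕ) (L U : Matrix (Fin n) (Fin n) ℝ)
    (hL : ∀ i j : Fin n, i ≤ j → L i j = 0)
    (hU : ∀ i j : Fin n, j ≤ i → U i j = 0)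
    (hLne : L ≠ 0) (hUne : U ≠ 0)
    (hρ : 0 < specRad (L + U)) :
    U * L ≠ 0 ∧ L * U ≠ 0 := by
  have hLn : L ^ n = 0 := strictLower_pow_eq_zero hL
  have hUn : U ^ n = 0 := strictUpper_pow_eq_zero hU
  have key : ∀ M : Matrix (Fin n) (Fin n) ℝ, (L + U) ^ (2 * n) = 0 → False := by
    intro _ hnil
    have hmap : ((L + U).map Complex.ofReal) ^ (2 * n) = 0 := by
      have : (L + U).map Complex.ofReal
          = (Complex.ofRealHom.mapMatrix : Matrix (Fin n) (Fin n) ℝ →+* _) (L + U) := rfl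
      rw [this, ← map_pow, hnil, map_zero]
    have := spectralRadius_eq_zero_of_pow_eq_zero hmap
    rw [specRad, this] at hρ
    exact lt_irrefl 0 hρ
  constructor
  · intro hUL
    exact key 0 (nilpotent_add_of_mul_eq_zero hLn hUn hUL)
  · intro hLU
    have : (U + L) ^ (2 * n) = 0 := nilpotent_add_of_mul_eq_zero hUn hLn hLU
    rw [add_comm] at this
    exact key 0 this
end

section
/- λ ≠ 0 is an eigenvalue of the iteration matrix of the full upper triangular column splitting {U_c^{(n)}, ..., U_c^{(2)}, L} if and only if λ is an eigenvalue of the backward Gauss–Seidel iteration matrix (I-U)⁻¹L. (Spectrum-equivalence of the FUTC-method and backward Gauss–Seidel.) -/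
open Matrix

/-- The `j`-th upper triangular column matrix: the entries `u_{i,j}` of the
`j`-th column of `U` for `i ≤ j - 1`, zero elsewhere. -/
def Uc {n : ℕ} (U : Matrix (Fin n) (Fin n) ℝ) (j : Fin n) :
    Matrix (Fin n) (Fin n) ℝ :=
  Matrix.of fun i h => if h = j ∧ i < j then U i h else 0

section aux
variable {m : Type*} [Fintype m] [DecidableEq m]

lemma nilp_of_grading {R : Type*} [CommRing R] (M : Matrix m m R) (f : m → ℕ) (N : ℕ)
    (hf : ∀ i, f i < N) (h : ∀ i j, f j ≤ f i → M i j = 0) : M ^ N = 0 := by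
  have key : ∀ k, ∀ i j, (M ^ k) i j ≠ 0 → f i + k ≤ f j := by
    intro k
    induction k with
    | zero =>
      intro i j hij
      rw [pow_zero] at hij
      by_cases hij' : i = j
      · subst hij'; omega
      · simp [Matrix.one_apply, hij'] at hij
    | succ k ih =>
      intro i j hij
      rw [pow_succ, Matrix.mul_apply] at hij
      obtain ⟨r, _, hr⟩ := Finset.exists_ne_zero_of_sum_ne_zero hij
      have h1 := ih i r (left_ne_zero_of_mul hr)
      have h2 : f r < f j := by
        by_contra hc
        exact (right_ne_zero_of_mul hr) (h r j (by omega))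
      omega
  ext i j
  by_contra hij
  have := key N i j hij
  have := hf i
  have := hf j
  omega

lemma left_inv_one_sub_of_nilp {R : Type*} [CommRing R] (M : Matrix m m R) (N : ℕ)
    (h : M ^ N = 0) : (∑ i ∈ Finset.range N, M ^ i) * (1 - M) = 1 := by
  have g := geom_sum_mul M N
  have e : (∑ i ∈ Finset.range N, M ^ i) * (1 - M) = -((∑ i ∈ Finset.range N, M ^ i) * (M - 1)) := by
    noncomm_ring
  rw [e, g, h]
  simp

lemma mem_spectrum_iff_eigen (M : Matrix m m ℂ) (lam : ℂ) :
    lam ∈ spectrum ℂ M ↔ ∃ v : m → ℂ, v ≠ 0 ∧ M *ᵥ v = lam • v := by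
  rw [spectrum.mem_iff, Matrix.isUnit_iff_isUnit_det, isUnit_iff_ne_zero, not_not,
    ← Matrix.exists_mulVec_eq_zero_iff]
  constructor
  · rintro ⟨v, hv, heq⟩
    refine ⟨v, hv, ?_⟩
    rw [Algebra.algebraMap_eq_smul_one, Matrix.sub_mulVec, Matrix.smul_mulVec,
      Matrix.one_mulVec, sub_eq_zero] at heq
    exact heq.symm
  · rintro ⟨v, hv, heq⟩
    refine ⟨v, hv, ?_⟩
    rw [Algebra.algebraMap_eq_smul_one, Matrix.sub_mulVec, Matrix.smul_mulVec,
      Matrix.one_mulVec, sub_eq_zero, heq]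

lemma eigen_inv_mul {A B C : Matrix m m ℂ} (hCA : C * A = 1) (hinv : A⁻¹ = C)
    (lam : ℂ) (v : m → ℂ) :
    (A⁻¹ * B) *ᵥ v = lam • v ↔ B *ᵥ v = lam • (A *ᵥ v) := by
  have hAC : A * C = 1 := mul_eq_one_comm.mpr hCA
  rw [hinv]
  constructor
  · intro h
    have := congrArg (A *ᵥ ·) h
    simp only [Matrix.mulVec_mulVec] at this ⊢
    rw [← Matrix.mul_assoc, hAC, Matrix.one_mul] at this
    rw [Matrix.mulVec_smul] at this
    simpa using this
  · intro h
    rw [← Matrix.mulVec_mulVec, h, Matrix.mulVec_smul, Matrix.mulVec_mulVec, hCA,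
      Matrix.one_mulVec]
  
end aux

lemma core (n : ℕ) (hn : 2 ≤ n) (lam : ℂ) (hlam : lam ≠ 0)
    (L' U' : Matrix (Fin n) (Fin n) ℂ)
    (b : Fin n → Matrix (Fin n) (Fin n) ℂ)
    (colv : Fin n → Fin n → ℂ) (c : Fin n → Fin n)
    (hc : ∀ q, (c q : ℕ) = n - 1 - (q : ℕ))
    (last : Fin n) (hlastv : (last : ℕ) = n - 1)
    (hblast : b last = L')
    (hcol : ∀ q, q ≠ last → ∀ w : Fin n → ℂ, ∀ i, (b q *ᵥ w) i = w (c q) * colv q i)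
    (hcolv0 : ∀ q i : Fin n, n - 1 - (q : ℕ) ≤ (i : ℕ) → colv q i = 0)
    (hsum : ∀ (x : Fin n → ℂ) (i : Fin n), ∑ q : Fin n, x (c q) * colv q i = (U' *ᵥ x) i) :
    (∃ v : Fin n × Fin n → ℂ, v ≠ 0 ∧ ∀ p i : Fin n,
        (∑ q ∈ Finset.Ici p, (b q *ᵥ fun j => v (q, j)) i) =
          lam * (v (p, i) - ∑ q ∈ Finset.Iio p, (b q *ᵥ fun j => v (q, j)) i)) ↔
      (∃ x : Fin n → ℂ, x ≠ 0 ∧ ∀ i, (L' *ᵥ x) i = lam * (x i - (U' *ᵥ x) i)) := by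
  have hne : ∀ q : Fin n, q ≠ last ↔ (q : ℕ) < n - 1 := by
    intro q; have := q.isLt; rw [ne_eq, Fin.ext_iff, hlastv]; omega
  have hIciLast : Finset.Ici last = {last} := by
    ext q; have := q.isLt
    simp only [Finset.mem_Ici, Finset.mem_singleton, Fin.le_def, Fin.ext_iff, hlastv]
    omega
  constructor
  · rintro ⟨v, hv, hE⟩
    set α : Fin n → Fin n → ℂ := fun p i => v (p, i) with hα
    set s : Fin n → Fin n → ℂ := fun q i => (b q *ᵥ fun j => v (q, j)) i with hs
    have hE' : ∀ p i : Fin n, (∑ q ∈ Finset.Ici p, s q i) =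
        lam * (α p i - ∑ q ∈ Finset.Iio p, s q i) := hE
    have hsval : ∀ q, q ≠ last → ∀ i, s q i = α q (c q) * colv q i := by
      intro q hq i
      rw [hs]
      exact hcol q hq _ i
    -- difference relation
    have hdiff : ∀ p p' : Fin n, (p' : ℕ) = (p : ℕ) + 1 → ∀ i : Fin n,
        n - 1 - (p : ℕ) ≤ (i : ℕ) → α p i = α p' i := by
      intro p p' hp' i hi
      have hp : (p : ℕ) < n - 1 := by have := p'.isLt; omega
      have h1 := hE' p i
      have h2 := hE' p' i
      have hIci : Finset.Ici p = insert p (Finset.Ici p') := by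
        ext q; have := q.isLt
        simp only [Finset.mem_Ici, Finset.mem_insert, Fin.le_def, Fin.ext_iff]
        omega
      have hIio : Finset.Iio p' = insert p (Finset.Iio p) := by
        ext q; have := q.isLt
        simp only [Finset.mem_Iio, Finset.mem_insert, Fin.lt_def, Fin.ext_iff]
        omega
      have hm1 : p ∉ Finset.Ici p' := by
        simp only [Finset.mem_Ici, Fin.le_def]; omega
      have hm2 : p ∉ Finset.Iio p := by simp
      rw [hIci, Finset.sum_insert hm1] at h1
      rw [hIio, Finset.sum_insert hm2] at h2
      have hsp : s p i = 0 := by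
        rw [hsval p ((hne p).mpr hp) i, hcolv0 p i hi, mul_zero]
      rw [hsp] at h1 h2
      have key : lam * (α p i - α p' i) = 0 := by linear_combination h2 - h1
      have := (mul_eq_zero.mp key).resolve_left hlam
      exact sub_eq_zero.mp this
    -- chaining
    have hchain : ∀ k : ℕ, ∀ p r : Fin n, (r : ℕ) = (p : ℕ) + k → ∀ i : Fin n,
        n - 1 - (p : ℕ) ≤ (i : ℕ) → α p i = α r i := by
      intro k
      induction k with
      | zero =>
        intro p r hr i hi
        have : r = p := Fin.ext (by omega)
        rw [this]
      | succ k ih =>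
        intro p r hr i hi
        have hp1 : (p : ℕ) + 1 < n := by have := r.isLt; omega
        have h1 := hdiff p ⟨(p : ℕ) + 1, hp1⟩ rfl i hi
        have h2 := ih ⟨(p : ℕ) + 1, hp1⟩ r (by show (r : ℕ) = (p : ℕ) + 1 + k; omega) i
          (by show n - 1 - ((p : ℕ) + 1) ≤ (i : ℕ); omega)
        rw [h1, h2]
    have hxc : ∀ q : Fin n, α q (c q) = α last (c q) := by
      intro q
      have hq := q.isLt
      exact hchain (n - 1 - (q : ℕ)) q last (by rw [hlastv]; omega) (c q) (by rw [hc])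
    -- the candidate eigenvector
    refine ⟨fun j => α last j, ?_, ?_⟩
    · -- nonzero
      intro h0
      apply hv
      have hs0 : ∀ q i : Fin n, s q i = 0 := by
        intro q i
        by_cases hq : q = last
        · show (b q *ᵥ fun j => v (q, j)) i = 0
          rw [hq, hblast]
          have h0' : (fun j => v (last, j)) = 0 := h0
          rw [h0', Matrix.mulVec_zero]
          simp
        · rw [hsval q hq i, hxc q]
          have : α last (c q) = 0 := congrFun h0 (c q)
          rw [this, zero_mul]
      funext pi
      obtain ⟨p, i⟩ := pi
      have h1 := hE' p i
      simp only [hs0, Finset.sum_const_zero, sub_zero] at h1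
      have : α p i = 0 := by
        rcases mul_eq_zero.mp h1.symm with h | h
        · exact absurd h hlam
        · exact h
      exact this
    · -- the GS equation
      intro i
      have h1 := hE' last i
      rw [hIciLast, Finset.sum_singleton] at h1
      have hlo : ∑ q ∈ Finset.Iio last, s q i = (U' *ᵥ fun j => α last j) i := by
        rw [← hsum (fun j => α last j) i]
        rw [Finset.sum_congr rfl (fun q hq => by
          have hql : q ≠ last := Fin.ne_of_lt (Finset.mem_Iio.mp hq)
          rw [hsval q hql i, hxc q])]
        refine Finset.sum_subset (Finset.subset_univ _) ?_
        intro q _ hq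
        have hq' : (q : ℕ) = n - 1 := by
          have := q.isLt
          simp only [Finset.mem_Iio, Fin.lt_def, hlastv] at hq
          omega
        rw [hcolv0 q i (by omega), mul_zero]
      have hsl : s last i = (L' *ᵥ fun j => α last j) i := by
        show (b last *ᵥ fun j => v (last, j)) i = _
        rw [hblast]
      rw [hsl, hlo] at h1
      exact h1
  · rintro ⟨x, hx, hGS⟩
    obtain ⟨i0, hi0⟩ := Function.ne_iff.mp hx
    set μ := (1 - lam) / lam with hμdef
    have hμ : lam * μ = 1 - lam := by rw [hμdef]; field_simp
    set v : Fin n × Fin n → ℂ :=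
      fun pi => x pi.2 + μ * ∑ q ∈ Finset.Ico pi.1 last, x (c q) * colv q pi.2 with hvdef
    have hvap : ∀ p i : Fin n, v (p, i) =
        x i + μ * ∑ q ∈ Finset.Ico p last, x (c q) * colv q i := fun _ _ => rfl
    have hvlast : (fun j => v (last, j)) = x := by
      funext j
      rw [hvap, Finset.Ico_self, Finset.sum_empty, mul_zero, add_zero]
    have hαc : ∀ p : Fin n, v (p, c p) = x (c p) := by
      intro p
      rw [hvap]
      have : ∀ q ∈ Finset.Ico p last, x (c q) * colv q (c p) = 0 := by
        intro q hq
        have hpq : (p : ℕ) ≤ (q : ℕ) := (Finset.mem_Ico.mp hq).1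
        rw [hcolv0 q (c p) (by rw [hc]; omega), mul_zero]
      rw [Finset.sum_congr rfl this, Finset.sum_const_zero, mul_zero, add_zero]
    have hsq : ∀ q : Fin n, q ≠ last → ∀ i, (b q *ᵥ fun j => v (q, j)) i =
        x (c q) * colv q i := by
      intro q hq i
      rw [hcol q hq _ i]
      show v (q, c q) * colv q i = _
      rw [hαc]
    refine ⟨v, ?_, ?_⟩
    · intro h0
      apply hi0
      have := congrFun h0 (last, i0)
      rw [hvap, Finset.Ico_self, Finset.sum_empty, mul_zero, add_zero] at this
      exact this
    · intro p i
      have hple : (p : ℕ) ≤ n - 1 := by have := p.isLt; omega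
      have hIci : Finset.Ici p = insert last (Finset.Ico p last) := by
        ext q; have := q.isLt
        simp only [Finset.mem_Ici, Finset.mem_insert, Finset.mem_Ico, Fin.le_def,
          Fin.lt_def, Fin.ext_iff, hlastv]
        omega
      have hnm : last ∉ Finset.Ico p last := by simp
      rw [hIci, Finset.sum_insert hnm]
      rw [Finset.sum_congr rfl (fun q hq => hsq q
        (Fin.ne_of_lt (Finset.mem_Ico.mp hq).2) i)]
      rw [Finset.sum_congr rfl (fun q hq => hsq q
        (Fin.ne_of_lt (lt_of_lt_of_le (Finset.mem_Iio.mp hq)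
          (Fin.le_def.mpr (by rw [hlastv]; exact hple)))) i)]
      rw [hblast, hvlast, hvap]
      set T := ∑ q ∈ Finset.Ico p last, x (c q) * colv q i with hT
      set Slo := ∑ q ∈ Finset.Iio p, x (c q) * colv q i with hSlo
      have hU2 : (U' *ᵥ x) i = Slo + T := by
        rw [← hsum x i, hSlo, hT]
        rw [← Finset.sum_union (by
          simp only [Finset.disjoint_left, Finset.mem_Iio, Finset.mem_Ico]
          intro q hq
          simp only [not_and, Fin.lt_def, Fin.le_def] at *
          omega)]
        have hun : Finset.Iio p ∪ Finset.Ico p last = Finset.Iio last := by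
          ext q; have := q.isLt
          simp only [Finset.mem_union, Finset.mem_Iio, Finset.mem_Ico, Fin.lt_def,
            Fin.le_def, hlastv]
          omega
        rw [hun]
        refine (Finset.sum_subset (Finset.subset_univ _) ?_).symm
        intro q _ hq
        have : (q : ℕ) = n - 1 := by
          have := q.isLt
          simp only [Finset.mem_Iio, Fin.lt_def, hlastv] at hq
          omega
        rw [hcolv0 q i (by omega), mul_zero]
      linear_combination hGS i - lam * hU2 - T * hμ
  

section aux2
set_option linter.unusedSectionVars false
variable {m : Type*} [Fintype m] [DecidableEq m]

lemma map_mul_ofReal (A B : Matrix m m ℝ) :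
    (A * B).map Complex.ofReal = A.map Complex.ofReal * B.map Complex.ofReal := by
  ext i j; simp [Matrix.mul_apply, Matrix.map_apply]

lemma map_one_ofReal : (1 : Matrix m m ℝ).map Complex.ofReal = 1 := by
  ext i j; simp [Matrix.map_apply, Matrix.one_apply, apply_ite Complex.ofReal]

lemma map_sub_ofReal (A B : Matrix m m ℝ) :
    (A - B).map Complex.ofReal = A.map Complex.ofReal - B.map Complex.ofReal := by
  ext i j; simp [Matrix.map_apply, Matrix.sub_apply]

end aux2

lemma Uc_mulVec (n : ℕ) (U : Matrix (Fin n) (Fin n) ℝ) (j0 : Fin n) (w : Fin n → ℂ)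
    (i : Fin n) : ((Uc U j0).map Complex.ofReal *ᵥ w) i =
      w j0 * (if i < j0 then Complex.ofReal (U i j0) else 0) := by
  show ∑ j, Complex.ofReal ((Uc U j0) i j) * w j = _
  rw [Finset.sum_eq_single j0]
  · show Complex.ofReal ((Uc U j0) i j0) * w j0 = _
    simp only [Uc, Matrix.of_apply]
    by_cases h : i < j0
    · simp only [h, and_true, if_true]
      ring
    · simp [h]
  · intro j _ hj
    simp [Uc, Matrix.of_apply, hj]
  · intro h; exact absurd (Finset.mem_univ _) h

lemma main_plumbing (n : ℕ) (hn : 2 ≤ n) (L U : Matrix (Fin n) (Fin n) ℝ)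
    (hL : ∀ i j : Fin n, i ≤ j → L i j = 0)
    (hU : ∀ i j : Fin n, j ≤ i → U i j = 0)
    (Bs : Fin n → Matrix (Fin n) (Fin n) ℝ)
    (hBsU : ∀ p : Fin n, (p : ℕ) < n - 1 → ∀ h : n - 1 - (p : ℕ) < n, Bs p = Uc U ⟨n - 1 - (p : ℕ), h⟩)
    (hBsL : ∀ p : Fin n, ¬((p : ℕ) < n - 1) → Bs p = L)
    (lam : ℂ) (hlam : lam ≠ 0) :
    lam ∈ spectrum ℂ (iterMatC Bs) ↔
      lam ∈ spectrum ℂ ((1 - U.map Complex.ofReal)⁻¹ * L.map Complex.ofReal) := by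
  set L' : Matrix (Fin n) (Fin n) ℂ := L.map Complex.ofReal with hL'd
  set U' : Matrix (Fin n) (Fin n) ℂ := U.map Complex.ofReal with hU'd
  set last : Fin n := ⟨n - 1, by omega⟩ with hlastd
  set c : Fin n → Fin n := fun q => ⟨n - 1 - (q : ℕ), by omega⟩ with hcd
  set colv : Fin n → Fin n → ℂ :=
    fun q i => if (i : ℕ) < n - 1 - (q : ℕ) then U' i (c q) else 0 with hcolvd
  -- real-side invertibility of 1 - blockL
  have hnilL : (blockL Bs) ^ (n + 1) = 0 := by
    refine nilp_of_grading (blockL Bs) (fun pi => n - (pi.1 : ℕ)) (n + 1)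
      (fun i => by show n - (i.1 : ℕ) < n + 1; omega) ?_
    intro pi qj hle
    have hle' : n - (qj.1 : ℕ) ≤ n - (pi.1 : ℕ) := hle
    have h1 := (pi.1).isLt
    have h2 := (qj.1).isLt
    show (if qj.1 < pi.1 then Bs qj.1 pi.2 qj.2 else 0) = 0
    rw [if_neg]
    rw [Fin.lt_def]
    omega
  have hGL := left_inv_one_sub_of_nilp (blockL Bs) (n + 1) hnilL
  have hLinv := Matrix.inv_eq_left_inv hGL
  set K : Matrix (Fin n × Fin n) (Fin n × Fin n) ℂ :=
    (∑ i ∈ Finset.range (n + 1), (blockL Bs) ^ i).map Complex.ofReal with hKd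
  have hK1 : K * (1 - (blockL Bs).map Complex.ofReal) = 1 := by
    have := congrArg (fun M => M.map Complex.ofReal) hGL
    rw [map_mul_ofReal, map_sub_ofReal, map_one_ofReal] at this
    exact this
  have hICinv : (1 - (blockL Bs).map Complex.ofReal)⁻¹ = K := Matrix.inv_eq_left_inv hK1
  have hIC : iterMatC Bs =
      (1 - (blockL Bs).map Complex.ofReal)⁻¹ * (blockU Bs).map Complex.ofReal := by
    show ((1 - blockL Bs)⁻¹ * blockU Bs).map Complex.ofReal = _
    rw [map_mul_ofReal, hLinv, hICinv, hKd]
  -- complex-side invertibility of 1 - U'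
  have hnilU : U' ^ n = 0 := by
    refine nilp_of_grading U' (fun i => (i : ℕ)) n (fun i => i.isLt) ?_
    intro i j hij
    have hij' : (j : ℕ) ≤ (i : ℕ) := hij
    show Complex.ofReal (U i j) = 0
    rw [hU i j (Fin.le_def.mpr hij'), Complex.ofReal_zero]
  have hGU := left_inv_one_sub_of_nilp U' n hnilU
  have hUinv := Matrix.inv_eq_left_inv hGU
  -- entry formulas for the block matrices
  have hUp : ∀ (v : Fin n × Fin n → ℂ) (p i : Fin n),
      ((blockU Bs).map Complex.ofReal *ᵥ v) (p, i) =
        ∑ q ∈ Finset.Ici p, ((Bs q).map Complex.ofReal *ᵥ fun j => v (q, j)) i := by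
    intro v p i
    show ∑ qj : Fin n × Fin n,
        Complex.ofReal (blockU Bs (p, i) qj) * v qj = _
    rw [Fintype.sum_prod_type]
    have hterm : ∀ q : Fin n, (∑ j, Complex.ofReal (blockU Bs (p, i) (q, j)) * v (q, j)) =
        if p ≤ q then ((Bs q).map Complex.ofReal *ᵥ fun j => v (q, j)) i else 0 := by
      intro q
      by_cases hpq : p ≤ q
      · rw [if_pos hpq]
        refine Finset.sum_congr rfl fun j _ => ?_
        show Complex.ofReal (if p ≤ q then Bs q i j else 0) * v (q, j) = _
        rw [if_pos hpq]
        rfl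
      · rw [if_neg hpq]
        refine Finset.sum_eq_zero fun j _ => ?_
        show Complex.ofReal (if p ≤ q then Bs q i j else 0) * v (q, j) = 0
        rw [if_neg hpq, Complex.ofReal_zero, zero_mul]
    rw [Finset.sum_congr rfl fun q _ => hterm q, ← Finset.sum_filter]
    congr 1
    ext q
    simp
  have hLo : ∀ (v : Fin n × Fin n → ℂ) (p i : Fin n),
      ((blockL Bs).map Complex.ofReal *ᵥ v) (p, i) =
        ∑ q ∈ Finset.Iio p, ((Bs q).map Complex.ofReal *ᵥ fun j => v (q, j)) i := by
    intro v p i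
    show ∑ qj : Fin n × Fin n,
        Complex.ofReal (blockL Bs (p, i) qj) * v qj = _
    rw [Fintype.sum_prod_type]
    have hterm : ∀ q : Fin n, (∑ j, Complex.ofReal (blockL Bs (p, i) (q, j)) * v (q, j)) =
        if q < p then ((Bs q).map Complex.ofReal *ᵥ fun j => v (q, j)) i else 0 := by
      intro q
      by_cases hpq : q < p
      · rw [if_pos hpq]
        refine Finset.sum_congr rfl fun j _ => ?_
        show Complex.ofReal (if q < p then Bs q i j else 0) * v (q, j) = _
        rw [if_pos hpq]
        rfl
      · rw [if_neg hpq]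
        refine Finset.sum_eq_zero fun j _ => ?_
        show Complex.ofReal (if q < p then Bs q i j else 0) * v (q, j) = 0
        rw [if_neg hpq, Complex.ofReal_zero, zero_mul]
    rw [Finset.sum_congr rfl fun q _ => hterm q, ← Finset.sum_filter]
    congr 1
    ext q
    simp
  -- block eigen-equation reformulation
  have hblock : ∀ v : Fin n × Fin n → ℂ,
      ((blockU Bs).map Complex.ofReal *ᵥ v =
        lam • ((1 - (blockL Bs).map Complex.ofReal) *ᵥ v)) ↔
      (∀ p i : Fin n,
        (∑ q ∈ Finset.Ici p, ((Bs q).map Complex.ofReal *ᵥ fun j => v (q, j)) i) =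
          lam * (v (p, i) -
            ∑ q ∈ Finset.Iio p, ((Bs q).map Complex.ofReal *ᵥ fun j => v (q, j)) i)) := by
    intro v
    rw [funext_iff, Prod.forall]
    refine forall_congr' fun p => forall_congr' fun i => ?_
    rw [hUp v p i]
    rw [Matrix.sub_mulVec, Matrix.one_mulVec]
    show _ ↔ _ = lam * (v (p, i) - _)
    constructor
    · intro h
      rw [h]
      show lam * ((v - (blockL Bs).map Complex.ofReal *ᵥ v) (p, i)) = _
      rw [Pi.sub_apply, hLo v p i]
    · intro h
      show _ = lam * ((v - (blockL Bs).map Complex.ofReal *ᵥ v) (p, i))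
      rw [Pi.sub_apply, hLo v p i]
      exact h
  -- GS eigen-equation reformulation
  have hgseq : ∀ x : Fin n → ℂ,
      (L' *ᵥ x = lam • ((1 - U') *ᵥ x)) ↔
        (∀ i, (L' *ᵥ x) i = lam * (x i - (U' *ᵥ x) i)) := by
    intro x
    rw [funext_iff]
    refine forall_congr' fun i => ?_
    rw [Matrix.sub_mulVec, Matrix.one_mulVec]
    show _ ↔ _
    constructor
    · intro h
      rw [h]
      show lam * ((x - U' *ᵥ x) i) = _
      rw [Pi.sub_apply]
    · intro h
      show _ = lam * ((x - U' *ᵥ x) i)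
      rw [Pi.sub_apply]
      exact h
  -- hypotheses of core
  have hlastv : (last : ℕ) = n - 1 := rfl
  have hblast : (Bs last).map Complex.ofReal = L' := by
    rw [hBsL last (by rw [hlastv]; omega)]
  have hcol : ∀ q : Fin n, q ≠ last → ∀ (w : Fin n → ℂ) (i : Fin n),
      ((Bs q).map Complex.ofReal *ᵥ w) i = w (c q) * colv q i := by
    intro q hq w i
    have hqlt : (q : ℕ) < n - 1 := by
      have := q.isLt
      rw [ne_eq, Fin.ext_iff, hlastv] at hq
      omega
    rw [hBsU q hqlt (by omega), Uc_mulVec]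
    show w (c q) * _ = w (c q) * colv q i
    congr 1
  have hcolv0 : ∀ q i : Fin n, n - 1 - (q : ℕ) ≤ (i : ℕ) → colv q i = 0 := by
    intro q i h
    rw [hcolvd]
    exact if_neg (by omega)
  have hcinv : Function.Involutive c := by
    intro q
    apply Fin.ext
    show n - 1 - (n - 1 - (q : ℕ)) = (q : ℕ)
    have := q.isLt
    omega
  have hsum : ∀ (x : Fin n → ℂ) (i : Fin n),
      (∑ q : Fin n, x (c q) * colv q i) = (U' *ᵥ x) i := by
    intro x i
    rw [Fintype.sum_bijective c hcinv.bijective _ (fun j => x j * colv (c j) i)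
      (fun q => by show x (c q) * colv q i = x (c q) * colv (c (c q)) i; rw [hcinv q])]
    show _ = ∑ j, Complex.ofReal (U i j) * x j
    refine Finset.sum_congr rfl fun j _ => ?_
    have hval : n - 1 - ((c j) : ℕ) = (j : ℕ) := by
      show n - 1 - (n - 1 - (j : ℕ)) = (j : ℕ)
      have := j.isLt
      omega
    by_cases h : (i : ℕ) < (j : ℕ)
    · have h1 : colv (c j) i = Complex.ofReal (U i j) := by
        show (if (i : ℕ) < n - 1 - ((c j) : ℕ) then U' i (c (c j)) else 0) = _
        rw [hval, if_pos h, hcinv j]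
        rfl
      rw [h1]
      ring
    · have h1 : colv (c j) i = 0 := by
        show (if (i : ℕ) < n - 1 - ((c j) : ℕ) then U' i (c (c j)) else 0) = _
        rw [hval, if_neg h]
      rw [h1, hU i j (Fin.le_def.mpr (by omega)), Complex.ofReal_zero, zero_mul, mul_zero]
  -- put everything together
  rw [mem_spectrum_iff_eigen, mem_spectrum_iff_eigen, hIC]
  have step1 : (∃ v : Fin n × Fin n → ℂ, v ≠ 0 ∧
      ((1 - (blockL Bs).map Complex.ofReal)⁻¹ * (blockU Bs).map Complex.ofReal) *ᵥ v =
        lam • v) ↔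
      (∃ v : Fin n × Fin n → ℂ, v ≠ 0 ∧ ∀ p i : Fin n,
        (∑ q ∈ Finset.Ici p, ((Bs q).map Complex.ofReal *ᵥ fun j => v (q, j)) i) =
          lam * (v (p, i) -
            ∑ q ∈ Finset.Iio p, ((Bs q).map Complex.ofReal *ᵥ fun j => v (q, j)) i)) :=
    exists_congr fun v => and_congr_right fun _ =>
      (eigen_inv_mul hK1 hICinv lam v).trans (hblock v)
  have step2 : (∃ x : Fin n → ℂ, x ≠ 0 ∧ ((1 - U')⁻¹ * L') *ᵥ x = lam • x) ↔
      (∃ x : Fin n → ℂ, x ≠ 0 ∧ ∀ i, (L' *ᵥ x) i = lam * (x i - (U' *ᵥ x) i)) :=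
    exists_congr fun x => and_congr_right fun _ =>
      (eigen_inv_mul hGU hUinv lam x).trans (hgseq x)
  rw [step1, step2]
  exact core n hn lam hlam L' U' (fun q => (Bs q).map Complex.ofReal) colv c
    (fun q => rfl) last hlastv hblast hcol hcolv0 hsum

/-- Spectrum-equivalence of the FUTC-method, given by the splitting
`{U_c^{(n)}, …, U_c^{(2)}, L}`, and the backward Gauss–Seidel method, whose
iteration matrix is `(I - U)⁻¹ L`: they have the same nonzero eigenvalues. -/

theorem FUTC_spectrum_equiv_backward_GaussSeidel (n : ℕ) (hn : 2 ≤ n)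
    (L U : Matrix (Fin n) (Fin n) ℝ)
    (hL : ∀ i j : Fin n, i ≤ j → L i j = 0)
    (hU : ∀ i j : Fin n, j ≤ i → U i j = 0) :
    ∀ lam : ℂ, lam ≠ 0 →
      (lam ∈ spectrum ℂ (iterMatC (fun p : Fin n =>
          if _ : p.val < n - 1 then Uc U ⟨n - 1 - p.val, by omega⟩ else L)) ↔
        lam ∈ spectrum ℂ
          ((1 - U.map Complex.ofReal)⁻¹ * L.map Complex.ofReal)) := by
  intro lam hlam
  refine main_plumbing n hn L U hL hU _ ?_ ?_ lam hlam
  · intro p hp h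
    exact dif_pos hp
  · intro p hp
    exact dif_neg hp
end

section
/- λ ≠ 0 is an eigenvalue of the iteration matrix of the full triangular column splitting {L_c^{(1)},...,L_c^{(n-1)}, U_c^{(n)},...,U_c^{(2)}} if and only if λ is an eigenvalue of the symmetric Gauss–Seidel iteration matrix (I-U)⁻¹L(I-L)⁻¹U. (Spectrum-equivalence of the FTC-method and symmetric Gauss–Seidel.) -/
open Matrix

/-- The `j`-th lower triangular column matrix: the entries `l_{i,j}` of the
`j`-th column of `L` for `i ≥ j + 1`, zero elsewhere. -/
def Lc {n : ℕ} (L : Matrix (Fin n) (Fin n) ℝ) (j : Fin n) :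
    Matrix (Fin n) (Fin n) ℝ :=
  Matrix.of fun i h => if h = j ∧ j < i then L i h else 0

section FTCproof
open Finset


section MapHelpers

variable {m₁ m₂ m₃ : Type*} [Fintype m₂]

lemma mapC_mul (A : Matrix m₁ m₂ ℝ) (B : Matrix m₂ m₃ ℝ) :
    (A * B).map Complex.ofReal = A.map Complex.ofReal * B.map Complex.ofReal := by
  ext i j
  simp [Matrix.mul_apply, Matrix.map_apply]

lemma mapC_sum {γ : Type*} (s : Finset γ) (g : γ → Matrix m₁ m₂ ℝ) :
    (∑ c ∈ s, g c).map Complex.ofReal = ∑ c ∈ s, (g c).map Complex.ofReal := by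
  ext i j
  simp [Matrix.map_apply, Matrix.sum_apply]

lemma mapC_one_sub {m : Type*} [DecidableEq m] (M : Matrix m m ℝ) :
    (1 - M).map Complex.ofReal = 1 - M.map Complex.ofReal := by
  ext i j
  by_cases h : i = j <;>
    simp [Matrix.map_apply, Matrix.sub_apply, Matrix.one_apply, h]

end MapHelpers

section Nilpotent

variable {m : Type*} [Fintype m] [DecidableEq m] {R : Type*} [CommRing R]

lemma pow_entry_zero_of_strict (M : Matrix m m R) (f : m → ℕ)
    (hM : ∀ i j, ¬ f j < f i → M i j = 0) :
    ∀ (k : ℕ) (i j : m), ¬ (f j + k ≤ f i) → (M ^ k) i j = 0 := by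
  intro k
  induction k with
  | zero =>
    intro i j h
    rw [pow_zero, Matrix.one_apply]
    split_ifs with hij
    · subst hij; omega
    · rfl
  | succ k ih =>
    intro i j h
    rw [pow_succ, Matrix.mul_apply]
    apply Finset.sum_eq_zero
    intro x _
    by_cases hx : f j < f x
    · have : ¬ (f x + k ≤ f i) := by omega
      rw [ih i x this, zero_mul]
    · rw [hM x j hx, mul_zero]

lemma isNilpotent_of_strict (M : Matrix m m R) (f : m → ℕ)
    (hM : ∀ i j, ¬ f j < f i → M i j = 0) : IsNilpotent M := by
  refine ⟨(Finset.univ.sup f) + 1, ?_⟩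
  ext i j
  rw [Matrix.zero_apply]
  apply pow_entry_zero_of_strict M f hM
  have : f i ≤ Finset.univ.sup f := Finset.le_sup (Finset.mem_univ i)
  omega

lemma isUnit_one_sub_of_strict (M : Matrix m m R) (f : m → ℕ)
    (hM : ∀ i j, ¬ f j < f i → M i j = 0) : IsUnit (1 - M) :=
  (isNilpotent_of_strict M f hM).isUnit_one_sub

lemma det_one_sub_ne_zero_of_strict {K : Type*} [Field K] (M : Matrix m m K) (f : m → ℕ)
    (hM : ∀ i j, ¬ f j < f i → M i j = 0) : (1 - M).det ≠ 0 := by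
  have h := (Matrix.isUnit_iff_isUnit_det _).mp (isUnit_one_sub_of_strict M f hM)
  exact h.ne_zero

end Nilpotent

lemma spec_iff_det {m : Type*} [Fintype m] [DecidableEq m] (A : Matrix m m ℂ) (z : ℂ) :
    z ∈ spectrum ℂ A ↔ (z • (1 : Matrix m m ℂ) - A).det = 0 := by
  rw [spectrum.mem_iff, Algebra.algebraMap_eq_smul_one, Matrix.isUnit_iff_isUnit_det,
    isUnit_iff_ne_zero, not_ne_iff]

lemma step_helper {m : Type*} [Fintype m] [DecidableEq m] (mu : ℂ) (S B P : Matrix m m ℂ)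
    (h0 : (S + B) * B = 0) (hP : (1 - mu • S) * P = 1) :
    (1 - mu • (S + B)) * ((1 + mu • B) * P) = 1 := by
  have key : (1 - mu • (S + B)) * (1 + mu • B) = 1 - mu • S := by
    calc (1 - mu • (S + B)) * (1 + mu • B)
        = 1 + mu • B - mu • ((S + B) * (1 + mu • B)) := by
          rw [sub_mul, one_mul, Matrix.smul_mul]
      _ = 1 + mu • B - mu • ((S + B) + mu • ((S + B) * B)) := by
          rw [mul_add, mul_one, Matrix.mul_smul]
      _ = 1 - mu • S := by rw [h0, smul_zero, add_zero, smul_add]; abel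
  rw [← mul_assoc, key, hP]

lemma sum_mulVec' {m : Type*} [Fintype m] {γ : Type*} (s : Finset γ)
    (g : γ → Matrix m m ℂ) (v : m → ℂ) :
    (∑ c ∈ s, g c) *ᵥ v = ∑ c ∈ s, (g c) *ᵥ v := by
  ext i
  simp only [Matrix.mulVec, dotProduct, Matrix.sum_apply, Finset.sum_mul,
    Finset.sum_apply]
  rw [Finset.sum_comm]

section Columns

variable {n : ℕ}

/-- `ℕ`-indexed lower column matrices. -/
def LcN (L : Matrix (Fin n) (Fin n) ℝ) (j : ℕ) : Matrix (Fin n) (Fin n) ℝ :=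
  if h : j < n then Lc L ⟨j, h⟩ else 0

/-- `ℕ`-indexed upper column matrices. -/
def UcN (U : Matrix (Fin n) (Fin n) ℝ) (j : ℕ) : Matrix (Fin n) (Fin n) ℝ :=
  if h : j < n then Uc U ⟨j, h⟩ else 0

lemma LcN_mul_LcN (L : Matrix (Fin n) (Fin n) ℝ) {j k : ℕ} (hjk : j ≤ k) :
    LcN L j * LcN L k = 0 := by
  unfold LcN
  split_ifs with h1 h2
  · ext i h
    rw [Matrix.mul_apply, Matrix.zero_apply]
    apply Finset.sum_eq_zero
    intro x _
    simp only [Lc, Matrix.of_apply]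
    split_ifs with hA hB
    · exfalso
      obtain ⟨rfl, hx⟩ := hA
      obtain ⟨rfl, hh⟩ := hB
      rw [Fin.lt_def] at hx hh
      simp at hx hh
      omega
    all_goals simp
  all_goals simp

lemma UcN_mul_UcN (U : Matrix (Fin n) (Fin n) ℝ) {j k : ℕ} (hkj : k ≤ j) :
    UcN U j * UcN U k = 0 := by
  unfold UcN
  split_ifs with h1 h2
  · ext i h
    rw [Matrix.mul_apply, Matrix.zero_apply]
    apply Finset.sum_eq_zero
    intro x _
    simp only [Uc, Matrix.of_apply]
    split_ifs with hA hB
    · exfalso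
      obtain ⟨rfl, hx⟩ := hA
      obtain ⟨rfl, hh⟩ := hB
      rw [Fin.lt_def] at hx hh
      simp at hx hh
      omega
    all_goals simp
  all_goals simp

lemma sum_LcN (hn : 2 ≤ n) (L : Matrix (Fin n) (Fin n) ℝ)
    (hL : ∀ i j : Fin n, i ≤ j → L i j = 0) :
    ∑ j ∈ Finset.range (n - 1), LcN L j = L := by
  ext i h
  rw [Matrix.sum_apply]
  by_cases hhi : (h : Fin n) < i
  · have hhn : (h : ℕ) < n - 1 := by
      have := i.isLt
      rw [Fin.lt_def] at hhi
      omega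
    rw [Finset.sum_eq_single h.val]
    · rw [LcN, dif_pos h.isLt]
      simp only [Lc, Matrix.of_apply, Fin.eta]
      simp [hhi]
    · intro b _ hb
      rw [LcN]
      split_ifs with h1
      · simp only [Lc, Matrix.of_apply]
        rw [if_neg]
        rintro ⟨rfl, -⟩
        exact hb rfl
      · rfl
    · intro hmem
      exact absurd (Finset.mem_range.mpr hhn) hmem
  · have hL0 : L i h = 0 := hL i h (not_lt.mp hhi)
    rw [hL0]
    apply Finset.sum_eq_zero
    intro b _
    rw [LcN]
    split_ifs with h1
    · simp only [Lc, Matrix.of_apply]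
      rw [if_neg]
      rintro ⟨rfl, hlt⟩
      exact hhi hlt
    · rfl

lemma sum_UcN (hn : 2 ≤ n) (U : Matrix (Fin n) (Fin n) ℝ)
    (hU : ∀ i j : Fin n, j ≤ i → U i j = 0) :
    ∑ s ∈ Finset.range (n - 1), UcN U (n - 1 - s) = U := by
  ext i h
  rw [Matrix.sum_apply]
  by_cases hih : (i : Fin n) < h
  · have hh1 : 1 ≤ (h : ℕ) := by
      rw [Fin.lt_def] at hih
      omega
    have hhn := h.isLt
    rw [Finset.sum_eq_single (n - 1 - h.val)]
    · have hcol : n - 1 - (n - 1 - h.val) = h.val := by omega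
      rw [UcN, hcol, dif_pos h.isLt]
      simp only [Uc, Matrix.of_apply, Fin.eta]
      simp [hih]
    · intro b hb hbne
      have hb' : b < n - 1 := Finset.mem_range.mp hb
      rw [UcN]
      split_ifs with h1
      · simp only [Uc, Matrix.of_apply]
        rw [if_neg]
        rintro ⟨hcol, -⟩
        apply hbne
        have : (h : ℕ) = n - 1 - b := by
          have := congrArg Fin.val hcol
          simpa using this
        omega
      · rfl
    · intro hmem
      exfalso
      exact hmem (Finset.mem_range.mpr (by omega))
  · have hU0 : U i h = 0 := hU i h (not_lt.mp hih)
    rw [hU0]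
    apply Finset.sum_eq_zero
    intro b _
    rw [UcN]
    split_ifs with h1
    · simp only [Uc, Matrix.of_apply]
      rw [if_neg]
      rintro ⟨rfl, hlt⟩
      exact hih hlt
    · rfl

end Columns

section FTCdefs

variable (n : ℕ) (L U : Matrix (Fin n) (Fin n) ℝ)

/-- `ℕ`-indexed family of the FTC splitting parts, complexified. -/
noncomputable def ftcC (p : ℕ) : Matrix (Fin n) (Fin n) ℂ :=
  if h1 : p < n - 1 then (Lc L ⟨p, by omega⟩).map Complex.ofReal
  else if h2 : p < 2 * n - 2 then (Uc U ⟨2 * n - 2 - p, by omega⟩).map Complex.ofReal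
  else 0

lemma ftcC_eq_Lc {p : ℕ} (hp : p < n - 1) :
    ftcC n L U p = (LcN L p).map Complex.ofReal := by
  rw [ftcC, dif_pos hp, LcN, dif_pos (by omega : p < n)]

lemma ftcC_eq_Uc {s : ℕ} (hs : s < n - 1) :
    ftcC n L U (n - 1 + s) = (UcN U (n - 1 - s)).map Complex.ofReal := by
  rw [ftcC, dif_neg (by omega : ¬ (n - 1 + s < n - 1)),
    dif_pos (by omega : n - 1 + s < 2 * n - 2), UcN, dif_pos (by omega : n - 1 - s < n)]
  rw [show (⟨2 * n - 2 - (n - 1 + s), by omega⟩ : Fin n) = ⟨n - 1 - s, by omega⟩ from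
    Fin.mk_eq_mk.mpr (by omega)]

lemma sum_ftcC_L (hn : 2 ≤ n) (hL : ∀ i j : Fin n, i ≤ j → L i j = 0) :
    ∑ j ∈ Finset.range (n - 1), ftcC n L U j = L.map Complex.ofReal := by
  rw [Finset.sum_congr rfl
    (fun j hj => ftcC_eq_Lc n L U (Finset.mem_range.mp hj)), ← mapC_sum,
    sum_LcN hn L hL]

lemma sum_ftcC_U (hn : 2 ≤ n) (hU : ∀ i j : Fin n, j ≤ i → U i j = 0) :
    ∑ s ∈ Finset.range (n - 1), ftcC n L U (n - 1 + s) = U.map Complex.ofReal := by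
  rw [Finset.sum_congr rfl
    (fun s hs => ftcC_eq_Uc n L U (Finset.mem_range.mp hs)), ← mapC_sum,
    sum_UcN hn U hU]

lemma sum_ftcC (hn : 2 ≤ n) (hL : ∀ i j : Fin n, i ≤ j → L i j = 0)
    (hU : ∀ i j : Fin n, j ≤ i → U i j = 0) :
    ∑ q ∈ Finset.range (2 * n - 2), ftcC n L U q
      = L.map Complex.ofReal + U.map Complex.ofReal := by
  rw [show 2 * n - 2 = (n - 1) + (n - 1) by omega, Finset.sum_range_add,
    sum_ftcC_L n L U hn hL, sum_ftcC_U n L U hn hU]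

/-- Partial products `(1+μC_{k-1})⋯(1+μC_0)`. -/
noncomputable def ftcP (mu : ℂ) : ℕ → Matrix (Fin n) (Fin n) ℂ
  | 0 => 1
  | (k+1) => (1 + mu • ftcC n L U k) * ftcP mu k

/-- Partial products of the upper part. -/
noncomputable def ftcQ (mu : ℂ) : ℕ → Matrix (Fin n) (Fin n) ℂ
  | 0 => 1
  | (s+1) => (1 + mu • ftcC n L U (n - 1 + s)) * ftcQ mu s

lemma ftcP_split (mu : ℂ) :
    ∀ s, ftcP n L U mu (n - 1 + s) = ftcQ n L U mu s * ftcP n L U mu (n - 1)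
  | 0 => by simp [ftcQ]
  | (s+1) => by
    rw [show n - 1 + (s + 1) = (n - 1 + s) + 1 from rfl, ftcP, ftcP_split mu s,
      ftcQ, mul_assoc]

lemma P_inv (mu : ℂ) :
    ∀ k, k ≤ n - 1 →
      (1 - mu • ∑ j ∈ Finset.range k, (LcN L j).map Complex.ofReal) * ftcP n L U mu k
        = 1 := by
  intro k
  induction k with
  | zero => intro _; simp [ftcP]
  | succ k ih =>
    intro hk
    rw [Finset.sum_range_succ, ftcP, ftcC_eq_Lc n L U (by omega : k < n - 1)]
    apply step_helper
    · rw [← Finset.sum_range_succ, Finset.sum_mul]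
      apply Finset.sum_eq_zero
      intro j hj
      have hj' := Finset.mem_range.mp hj
      rw [← mapC_mul, LcN_mul_LcN L (by omega : j ≤ k)]
      simp
    · exact ih (by omega)

lemma Q_inv (mu : ℂ) :
    ∀ s, s ≤ n - 1 →
      (1 - mu • ∑ t ∈ Finset.range s, (UcN U (n - 1 - t)).map Complex.ofReal)
          * ftcQ n L U mu s = 1 := by
  intro s
  induction s with
  | zero => intro _; simp [ftcQ]
  | succ s ih =>
    intro hs
    rw [Finset.sum_range_succ, ftcQ, ftcC_eq_Uc n L U (by omega : s < n - 1)]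
    apply step_helper
    · rw [← Finset.sum_range_succ, Finset.sum_mul]
      apply Finset.sum_eq_zero
      intro t ht
      have ht' := Finset.mem_range.mp ht
      rw [← mapC_mul, UcN_mul_UcN U (by omega : n - 1 - s ≤ n - 1 - t)]
      simp
    · exact ih (by omega)

lemma P_L (hn : 2 ≤ n) (hL : ∀ i j : Fin n, i ≤ j → L i j = 0) (mu : ℂ) :
    (1 - mu • L.map Complex.ofReal) * ftcP n L U mu (n - 1) = 1 := by
  have h := P_inv n L U mu (n - 1) le_rfl
  rwa [← mapC_sum, sum_LcN hn L hL] at h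

lemma Q_U (hn : 2 ≤ n) (hU : ∀ i j : Fin n, j ≤ i → U i j = 0) (mu : ℂ) :
    (1 - mu • U.map Complex.ofReal) * ftcQ n L U mu (n - 1) = 1 := by
  have h := Q_inv n L U mu (n - 1) le_rfl
  rwa [← mapC_sum, sum_UcN hn U hU] at h

lemma M0_mul_T (hn : 2 ≤ n) (hL : ∀ i j : Fin n, i ≤ j → L i j = 0)
    (hU : ∀ i j : Fin n, j ≤ i → U i j = 0) (mu : ℂ) :
    ((1 - mu • L.map Complex.ofReal) * (1 - mu • U.map Complex.ofReal))
        * ftcP n L U mu (2 * n - 2) = 1 := by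
  rw [show 2 * n - 2 = (n - 1) + (n - 1) by omega, ftcP_split, mul_assoc,
    ← mul_assoc (1 - mu • U.map Complex.ofReal), Q_U n L U hn hU, one_mul,
    P_L n L U hn hL]

end FTCdefs

/-- extraction of block components of a vector -/
def vaF {n d : ℕ} (α : Fin d × Fin n → ℂ) (q : ℕ) (j : Fin n) : ℂ :=
  if h : q < d then α (⟨q, h⟩, j) else 0

/-- the rows of the block eigen-system -/
def RowSys (n : ℕ) (L U : Matrix (Fin n) (Fin n) ℝ) (lam : ℂ) (a : ℕ → Fin n → ℂ) : Prop :=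
  ∀ p < 2 * n - 2, lam • a p
    = ∑ q ∈ Finset.range (2 * n - 2), (if q < p then lam else 1) • (ftcC n L U q *ᵥ a q)

/-- the difference form of consecutive rows -/
def RecSys (n : ℕ) (L U : Matrix (Fin n) (Fin n) ℝ) (lam : ℂ) (a : ℕ → Fin n → ℂ) : Prop :=
  ∀ p, p + 1 < 2 * n - 2 →
    lam • a (p + 1) = lam • a p + (lam - 1) • (ftcC n L U p *ᵥ a p)

/-- the first row -/
def Row0 (n : ℕ) (L U : Matrix (Fin n) (Fin n) ℝ) (lam : ℂ) (a : ℕ → Fin n → ℂ) : Prop :=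
  lam • a 0 = ∑ q ∈ Finset.range (2 * n - 2), ftcC n L U q *ᵥ a q

section Unpack

variable {n : ℕ} (L U : Matrix (Fin n) (Fin n) ℝ) (lam : ℂ)
  (Bs : Fin (2 * n - 2) → Matrix (Fin n) (Fin n) ℝ)
  (hBs : ∀ p : Fin (2 * n - 2), (Bs p).map Complex.ofReal = ftcC n L U p.val)

include hBs

lemma entry_lemma (p : Fin (2 * n - 2)) (i : Fin n) (q : Fin (2 * n - 2)) (j : Fin n) :
    (lam • (1 - (blockL Bs).map Complex.ofReal) - (blockU Bs).map Complex.ofReal)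
        (p, i) (q, j)
      = (if q = p ∧ j = i then lam else 0)
        - (if (q : ℕ) < (p : ℕ) then lam else 1) * ftcC n L U q.val i j := by
  have hB : (Complex.ofReal (Bs q i j)) = ftcC n L U q.val i j := by
    have := congrFun (congrFun (hBs q) i) j
    simpa [Matrix.map_apply] using this
  simp only [Matrix.sub_apply, Matrix.smul_apply, Matrix.map_apply, blockL, blockU,
    Matrix.of_apply, Matrix.one_apply, smul_eq_mul]
  rw [apply_ite Complex.ofReal, apply_ite Complex.ofReal, Complex.ofReal_zero, hB]
  rcases Nat.lt_trichotomy (q : ℕ) (p : ℕ) with hlt | heq | hgt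
  · have h1 : (q : Fin (2*n-2)) < p := Fin.lt_def.mpr hlt
    have h2 : ¬ ((p, i) = (q, j)) := by
      simp only [Prod.mk.injEq, not_and]
      intro hpq; exact absurd hpq.symm (Fin.ne_of_lt h1)
    have h3 : ¬ (p ≤ q) := not_le.mpr h1
    have h4 : ¬ (q = p ∧ j = i) := by
      rintro ⟨rfl, -⟩; exact absurd rfl (Fin.ne_of_lt h1)
    rw [if_pos h1, if_neg h2, if_neg h3, if_neg h4, if_pos hlt]
    ring
  · have h0 : q = p := Fin.ext heq
    subst h0
    have h1 : ¬ ((q : Fin (2*n-2)) < q) := lt_irrefl q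
    have h3 : (q : Fin (2*n-2)) ≤ q := le_refl q
    rw [if_neg h1, if_pos h3, if_neg (lt_irrefl (q : ℕ))]
    by_cases hij : j = i
    · subst hij
      rw [if_pos rfl, if_pos ⟨rfl, rfl⟩]
      ring
    · have : ¬ ((q, i) = (q, j)) := by
        simp only [Prod.mk.injEq, not_and]
        intro _; exact fun h => hij h.symm
      rw [if_neg this, if_neg (by rintro ⟨-, rfl⟩; exact hij rfl)]
      ring
  · have h1 : ¬ ((q : Fin (2*n-2)) < p) := by rw [Fin.lt_def]; omega
    have h2 : ¬ ((p, i) = (q, j)) := by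
      simp only [Prod.mk.injEq, not_and]
      intro hpq; subst hpq; omega
    have h3 : (p ≤ q) := Fin.le_def.mpr (by omega)
    have h4 : ¬ (q = p ∧ j = i) := by
      rintro ⟨rfl, -⟩; omega
    rw [if_pos h3, if_neg h1, if_neg h2, if_neg h4, if_neg (by omega : ¬ (q:ℕ) < (p:ℕ))]
    ring

lemma unpack_lemma (α : Fin (2 * n - 2) × Fin n → ℂ) :
    (lam • (1 - (blockL Bs).map Complex.ofReal) - (blockU Bs).map Complex.ofReal) *ᵥ α = 0
      ↔ RowSys n L U lam (vaF α) := by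
  set M := lam • (1 - (blockL Bs).map Complex.ofReal) - (blockU Bs).map Complex.ofReal
    with hM
  have hval : ∀ (p : Fin (2 * n - 2)) (i : Fin n),
      (M *ᵥ α) (p, i) = lam * α (p, i)
        - ∑ q ∈ Finset.range (2 * n - 2),
            (if q < (p : ℕ) then lam else 1) * ((ftcC n L U q *ᵥ vaF α q) i) := by
    intro p i
    have e1 : (M *ᵥ α) (p, i) = ∑ qj : Fin (2 * n - 2) × Fin n, M (p, i) qj * α qj := by
      simp [Matrix.mulVec, dotProduct]
    rw [e1, Fintype.sum_prod_type]
    have e2 : ∀ (q : Fin (2 * n - 2)) (j : Fin n),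
        M (p, i) (q, j) * α (q, j)
          = (if q = p ∧ j = i then lam * α (q, j) else 0)
            - ((if (q : ℕ) < (p : ℕ) then lam else 1) * ftcC n L U q.val i j) * α (q, j) := by
      intro q j
      rw [hM, entry_lemma L U lam Bs hBs, sub_mul, ite_mul, zero_mul]
    simp only [e2]
    rw [Finset.sum_congr rfl (fun q _ => Finset.sum_sub_distrib _ _), Finset.sum_sub_distrib]
    congr 1
    · rw [Fintype.sum_eq_single p]
      · rw [Fintype.sum_eq_single i]
        · simp
        · intro j hj; rw [if_neg (by tauto)]
      · intro q hq
        apply Finset.sum_eq_zero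
        intro j _
        rw [if_neg (by tauto)]
    · have e3 : ∀ q : Fin (2 * n - 2),
          ∑ j : Fin n, ((if (q : ℕ) < (p : ℕ) then lam else 1) * ftcC n L U q.val i j)
              * α (q, j)
            = (if (q : ℕ) < (p : ℕ) then lam else 1) * ((ftcC n L U q.val *ᵥ vaF α q.val) i) := by
        intro q
        have hmv : (ftcC n L U q.val *ᵥ vaF α q.val) i
            = ∑ j, ftcC n L U q.val i j * α (q, j) := by
          simp only [Matrix.mulVec, dotProduct]
          apply Finset.sum_congr rfl
          intro j _
          rw [vaF, dif_pos q.isLt, Fin.eta]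
        rw [hmv, Finset.mul_sum]
        apply Finset.sum_congr rfl
        intro j _
        ring
      rw [Finset.sum_congr rfl (fun q _ => e3 q)]
      exact Fin.sum_univ_eq_sum_range
        (fun q => (if q < (p : ℕ) then lam else 1) * ((ftcC n L U q *ᵥ vaF α q) i)) _
  constructor
  · intro h0 p hp
    funext i
    have := congrFun h0 (⟨p, hp⟩, i)
    rw [hval ⟨p, hp⟩ i, Pi.zero_apply, sub_eq_zero] at this
    rw [Pi.smul_apply, smul_eq_mul]
    have hva : vaF α p i = α (⟨p, hp⟩, i) := by rw [vaF, dif_pos hp]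
    rw [hva, this, Finset.sum_apply]
    apply Finset.sum_congr rfl
    intro q _
    rw [Pi.smul_apply, smul_eq_mul]
  · intro h0
    funext pi
    obtain ⟨p, i⟩ := pi
    rw [hval p i, Pi.zero_apply, sub_eq_zero]
    have := h0 (p : ℕ) p.isLt
    have hva : vaF α (p : ℕ) i = α (p, i) := by rw [vaF, dif_pos p.isLt, Fin.eta]
    calc lam * α (p, i) = lam * vaF α (p : ℕ) i := by rw [hva]
      _ = (lam • vaF α (p : ℕ)) i := by rw [Pi.smul_apply, smul_eq_mul]
      _ = _ := by
          rw [this, Finset.sum_apply]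
          apply Finset.sum_congr rfl
          intro q _
          rw [Pi.smul_apply, smul_eq_mul]

end Unpack

section Bridges

variable {n : ℕ} (L U : Matrix (Fin n) (Fin n) ℝ) (lam : ℂ)

lemma keysum (v : ℕ → Fin n → ℂ) {p : ℕ} (hp : p < 2 * n - 2) :
    ∑ q ∈ Finset.range (2 * n - 2), (if q < p + 1 then lam else 1) • v q
      = (∑ q ∈ Finset.range (2 * n - 2), (if q < p then lam else 1) • v q)
        + (lam - 1) • v p := by
  have hcong : ∀ q ∈ Finset.range (2 * n - 2), (if q < p + 1 then lam else 1) • v q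
      = (if q < p then lam else 1) • v q + (if q = p then (lam - 1) • v q else 0) := by
    intro q _
    rcases Nat.lt_trichotomy q p with h | h | h
    · rw [if_pos (by omega), if_pos h, if_neg (by omega), add_zero]
    · subst h
      rw [if_pos (by omega), if_neg (by omega), if_pos rfl, ← add_smul]
      congr 1
      ring
    · rw [if_neg (by omega), if_neg (by omega), if_neg (by omega), add_zero]
  rw [Finset.sum_congr rfl hcong, Finset.sum_add_distrib,
    Finset.sum_ite_eq' (Finset.range (2 * n - 2)) p (fun q => (lam - 1) • v q),
    if_pos (Finset.mem_range.mpr hp)]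

lemma sys_iff (hn : 2 ≤ n) (hlam : lam ≠ 0) :
    (∃ a : ℕ → Fin n → ℂ, (∃ p, p < 2 * n - 2 ∧ a p ≠ 0) ∧ RowSys n L U lam a)
      ↔ (∃ a : ℕ → Fin n → ℂ, a 0 ≠ 0 ∧ RecSys n L U lam a ∧ Row0 n L U lam a) := by
  constructor
  · rintro ⟨a, ⟨p0, hp0, hap0⟩, hrow⟩
    have hrec : RecSys n L U lam a := by
      intro p hp
      have h1 := hrow p (by omega)
      have h2 := hrow (p + 1) hp
      rw [h2, keysum lam _ (by omega : p < 2*n-2), ← h1]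
    have hrow0 : Row0 n L U lam a := by
      have h0 := hrow 0 (by omega)
      rw [Row0, h0]
      apply Finset.sum_congr rfl
      intro q _
      rw [if_neg (by omega), one_smul]
    refine ⟨a, ?_, hrec, hrow0⟩
    intro ha0
    have hzero : ∀ p, p < 2 * n - 2 → a p = 0 := by
      intro p
      induction p with
      | zero => intro _; exact ha0
      | succ p ih =>
        intro hp
        have h1 := hrec p hp
        rw [ih (by omega), Matrix.mulVec_zero, smul_zero, smul_zero, add_zero] at h1
        exact (smul_eq_zero.mp h1).resolve_left hlam
    exact hap0 (hzero p0 hp0)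
  · rintro ⟨a, ha0, hrec, hrow0⟩
    refine ⟨a, ⟨0, by omega, ha0⟩, ?_⟩
    intro p
    induction p with
    | zero =>
      intro _
      rw [hrow0]
      apply Finset.sum_congr rfl
      intro q _
      rw [if_neg (by omega), one_smul]
    | succ p ih =>
      intro hp
      rw [keysum lam _ (by omega : p < 2 * n - 2), ← ih (by omega), ← hrec p hp]

lemma telescope (hn : 2 ≤ n) (a : ℕ → Fin n → ℂ)
    (hrec : ∀ p, p + 1 < 2 * n - 2 →
      lam • a (p + 1) = lam • a p + (lam - 1) • (ftcC n L U p *ᵥ a p)) :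
    (lam - 1) • ∑ q ∈ Finset.range (2 * n - 2), (ftcC n L U q *ᵥ a q)
      = (lam • a (2 * n - 3) - lam • a 0)
        + (lam - 1) • (ftcC n L U (2 * n - 3) *ᵥ a (2 * n - 3)) := by
  rw [show 2 * n - 2 = (2 * n - 3) + 1 by omega, Finset.sum_range_succ, smul_add]
  congr 1
  rw [Finset.smul_sum]
  have hper : ∀ q ∈ Finset.range (2 * n - 3),
      (lam - 1) • (ftcC n L U q *ᵥ a q) = lam • a (q + 1) - lam • a q := by
    intro q hq
    have := Finset.mem_range.mp hq
    rw [hrec q (by omega)]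
    abel
  rw [Finset.sum_congr rfl hper, Finset.sum_range_sub (fun q => lam • a q)]

lemma recrow_to_T (hn : 2 ≤ n) (hlam : lam ≠ 0) (a : ℕ → Fin n → ℂ)
    (ha0 : a 0 ≠ 0) (hrec : RecSys n L U lam a) (hrow0 : Row0 n L U lam a) :
    ∃ x, x ≠ 0 ∧ ftcP n L U (1 - lam⁻¹) (2 * n - 2) *ᵥ x = lam • x := by
  have hmul : lam * (1 - lam⁻¹) = lam - 1 := by field_simp
  have haP : ∀ p, p < 2 * n - 2 → a p = ftcP n L U (1 - lam⁻¹) p *ᵥ a 0 := by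
    intro p
    induction p with
    | zero => intro _; rw [ftcP, Matrix.one_mulVec]
    | succ p ih =>
      intro hp
      have hap := ih (by omega)
      have h3 : lam⁻¹ * (lam - 1) = 1 - lam⁻¹ := by field_simp
      calc a (p + 1) = lam⁻¹ • (lam • a (p + 1)) := by
              rw [smul_smul, inv_mul_cancel₀ hlam, one_smul]
        _ = a p + (1 - lam⁻¹) • (ftcC n L U p *ᵥ a p) := by
              rw [hrec p hp, smul_add, smul_smul, inv_mul_cancel₀ hlam, one_smul,
                smul_smul, h3]
        _ = ftcP n L U (1 - lam⁻¹) (p + 1) *ᵥ a 0 := by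
              rw [hap, ftcP, ← Matrix.mulVec_mulVec, Matrix.add_mulVec, Matrix.one_mulVec,
                Matrix.smul_mulVec]
  refine ⟨a 0, ha0, ?_⟩
  apply smul_right_injective (Fin n → ℂ) hlam
  beta_reduce
  have hae := haP (2 * n - 3) (by omega)
  have he : 2 * n - 2 = (2 * n - 3) + 1 := by omega
  rw [he, ftcP, ← Matrix.mulVec_mulVec, ← hae, Matrix.add_mulVec, Matrix.one_mulVec,
    Matrix.smul_mulVec]
  rw [smul_add, smul_smul, hmul]
  have hstar : (lam - 1) • (lam • a 0)
      = (lam • a (2 * n - 3) - lam • a 0)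
        + (lam - 1) • (ftcC n L U (2 * n - 3) *ᵥ a (2 * n - 3)) := by
    calc (lam - 1) • (lam • a 0)
        = (lam - 1) • ∑ q ∈ Finset.range (2 * n - 2), (ftcC n L U q *ᵥ a q) := by
          rw [hrow0]
      _ = _ := telescope L U lam hn a hrec
  linear_combination (norm := module) -hstar

lemma T_to_recrow (hn : 2 ≤ n) (hlam : lam ≠ 0) (hlam1 : lam ≠ 1)
    (x : Fin n → ℂ) (hx : x ≠ 0)
    (hT : ftcP n L U (1 - lam⁻¹) (2 * n - 2) *ᵥ x = lam • x) :
    ∃ a : ℕ → Fin n → ℂ, a 0 ≠ 0 ∧ RecSys n L U lam a ∧ Row0 n L U lam a := by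
  have hmul : lam * (1 - lam⁻¹) = lam - 1 := by field_simp
  set a : ℕ → Fin n → ℂ := fun p => ftcP n L U (1 - lam⁻¹) p *ᵥ x with ha
  have ha0 : a 0 = x := by simp only [ha]; rw [ftcP, Matrix.one_mulVec]
  have hrec : RecSys n L U lam a := by
    intro p hp
    simp only [ha]
    rw [ftcP, ← Matrix.mulVec_mulVec, Matrix.add_mulVec, Matrix.one_mulVec,
      Matrix.smul_mulVec, smul_add, smul_smul, hmul]
  refine ⟨a, by rw [ha0]; exact hx, hrec, ?_⟩
  have hlam1' : lam - 1 ≠ 0 := sub_ne_zero.mpr hlam1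
  rw [Row0, ha0]
  apply smul_right_injective (Fin n → ℂ) hlam1'
  beta_reduce
  rw [telescope L U lam hn a hrec]
  have he : 2 * n - 2 = (2 * n - 3) + 1 := by omega
  have hTe : lam • a (2 * n - 3)
      + (lam - 1) • (ftcC n L U (2 * n - 3) *ᵥ a (2 * n - 3)) = lam • (lam • x) := by
    rw [← hT, he]
    simp only [ha]
    rw [ftcP, ← Matrix.mulVec_mulVec, Matrix.add_mulVec, Matrix.one_mulVec,
      Matrix.smul_mulVec, smul_add, smul_smul, hmul]
  rw [ha0]
  linear_combination (norm := module) -hTe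

lemma lam_one_iff (hn : 2 ≤ n)
    (hL : ∀ i j : Fin n, i ≤ j → L i j = 0) (hU : ∀ i j : Fin n, j ≤ i → U i j = 0) :
    (∃ a : ℕ → Fin n → ℂ, a 0 ≠ 0 ∧ RecSys n L U 1 a ∧ Row0 n L U 1 a)
      ↔ ∃ x, x ≠ 0 ∧ (L.map Complex.ofReal + U.map Complex.ofReal) *ᵥ x = x := by
  constructor
  · rintro ⟨a, ha0, hrec, hrow0⟩
    have hconst : ∀ p, p < 2 * n - 2 → a p = a 0 := by
      intro p
      induction p with
      | zero => intro _; rfl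
      | succ p ih =>
        intro hp
        have h1 := hrec p hp
        rw [one_smul, one_smul, sub_self, zero_smul, add_zero] at h1
        rw [h1, ih (by omega)]
    refine ⟨a 0, ha0, ?_⟩
    rw [Row0, one_smul] at hrow0
    have h2 : ∑ q ∈ Finset.range (2 * n - 2), ftcC n L U q *ᵥ a q
        = ∑ q ∈ Finset.range (2 * n - 2), ftcC n L U q *ᵥ a 0 :=
      Finset.sum_congr rfl (fun q hq => by rw [hconst q (Finset.mem_range.mp hq)])
    rw [← sum_ftcC n L U hn hL hU, sum_mulVec', ← h2, ← hrow0]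
  · rintro ⟨x, hx, hfix⟩
    refine ⟨fun _ => x, hx, ?_, ?_⟩
    · intro p hp
      simp
    · rw [Row0, one_smul]
      rw [← sum_ftcC n L U hn hL hU, sum_mulVec'] at hfix
      exact hfix.symm

lemma scaled_identity {m : Type*} [Fintype m] [DecidableEq m]
    (A B : Matrix m m ℂ) (hlam : lam ≠ 0) :
    lam • ((1 - (1 - lam⁻¹) • A) * (1 - (1 - lam⁻¹) • B) - lam⁻¹ • (1 : Matrix m m ℂ))
      = (1 - lam⁻¹) • (lam • ((1 - A) * (1 - B)) - A * B) := by
  have h1 : (1 - (1 - lam⁻¹) • A) * (1 - (1 - lam⁻¹) • B)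
      = 1 - (1 - lam⁻¹) • B - (1 - lam⁻¹) • A
        + ((1 - lam⁻¹) * (1 - lam⁻¹)) • (A * B) := by
    rw [mul_sub, mul_one, Matrix.mul_smul, sub_mul, one_mul, Matrix.smul_mul, smul_sub,
      smul_smul]
    abel
  have h2 : (1 - A) * (1 - B) = 1 - B - A + A * B := by noncomm_ring
  rw [h1, h2]
  match_scalars <;> field_simp <;> ring

lemma det_scaled_iff {m : Type*} [Fintype m] [DecidableEq m]
    (A B : Matrix m m ℂ) (hlam : lam ≠ 0) (hlam1 : lam ≠ 1) :
    ((1 - (1 - lam⁻¹) • A) * (1 - (1 - lam⁻¹) • B) - lam⁻¹ • (1 : Matrix m m ℂ)).det = 0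
      ↔ (lam • ((1 - A) * (1 - B)) - A * B).det = 0 := by
  have hmu : (1 : ℂ) - lam⁻¹ ≠ 0 := by
    intro h
    apply hlam1
    exact inv_eq_one.mp (sub_eq_zero.mp h).symm
  have key := congrArg Matrix.det (scaled_identity lam A B hlam)
  rw [Matrix.det_smul, Matrix.det_smul] at key
  constructor
  · intro h
    rw [h, mul_zero] at key
    rcases mul_eq_zero.mp key.symm with h' | h'
    · exact absurd h' (pow_ne_zero _ hmu)
    · exact h'
  · intro h
    rw [h, mul_zero] at key
    rcases mul_eq_zero.mp key with h' | h'
    · exact absurd h' (pow_ne_zero _ hlam)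
    · exact h'

end Bridges

section EigTransfer

variable {n : ℕ} (L U : Matrix (Fin n) (Fin n) ℝ) (lam : ℂ)

lemma eig_iff_det' (M : Matrix (Fin n) (Fin n) ℂ) (c : ℂ) :
    (∃ x, x ≠ 0 ∧ M *ᵥ x = c • x) ↔ (M - c • (1 : Matrix (Fin n) (Fin n) ℂ)).det = 0 := by
  rw [← Matrix.exists_mulVec_eq_zero_iff]
  apply exists_congr
  intro x
  constructor
  · rintro ⟨hx, hMx⟩
    exact ⟨hx, by rw [Matrix.sub_mulVec, Matrix.smul_mulVec, Matrix.one_mulVec, hMx,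
      sub_self]⟩
  · rintro ⟨hx, h⟩
    refine ⟨hx, ?_⟩
    rwa [Matrix.sub_mulVec, Matrix.smul_mulVec, Matrix.one_mulVec, sub_eq_zero] at h

lemma eig_T_iff_M0 (hn : 2 ≤ n) (hlam : lam ≠ 0)
    (hL : ∀ i j : Fin n, i ≤ j → L i j = 0) (hU : ∀ i j : Fin n, j ≤ i → U i j = 0) :
    (∃ x, x ≠ 0 ∧ ftcP n L U (1 - lam⁻¹) (2 * n - 2) *ᵥ x = lam • x)
      ↔ (∃ x, x ≠ 0 ∧
          ((1 - (1 - lam⁻¹) • L.map Complex.ofReal)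
            * (1 - (1 - lam⁻¹) • U.map Complex.ofReal)) *ᵥ x = lam⁻¹ • x) := by
  have hM0T := M0_mul_T n L U hn hL hU (1 - lam⁻¹)
  have hTM0 : ftcP n L U (1 - lam⁻¹) (2 * n - 2)
      * ((1 - (1 - lam⁻¹) • L.map Complex.ofReal)
          * (1 - (1 - lam⁻¹) • U.map Complex.ofReal)) = 1 :=
    mul_eq_one_comm.mp hM0T
  constructor
  · rintro ⟨x, hx, hTx⟩
    refine ⟨x, hx, ?_⟩
    have h1 : ((1 - (1 - lam⁻¹) • L.map Complex.ofReal)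
        * (1 - (1 - lam⁻¹) • U.map Complex.ofReal))
          *ᵥ (ftcP n L U (1 - lam⁻¹) (2 * n - 2) *ᵥ x) = x := by
      rw [Matrix.mulVec_mulVec, hM0T, Matrix.one_mulVec]
    rw [hTx, Matrix.mulVec_smul] at h1
    calc ((1 - (1 - lam⁻¹) • L.map Complex.ofReal)
            * (1 - (1 - lam⁻¹) • U.map Complex.ofReal)) *ᵥ x
        = lam⁻¹ • (lam • (((1 - (1 - lam⁻¹) • L.map Complex.ofReal)
            * (1 - (1 - lam⁻¹) • U.map Complex.ofReal)) *ᵥ x)) := by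
          rw [smul_smul, inv_mul_cancel₀ hlam, one_smul]
      _ = lam⁻¹ • x := by rw [h1]
  · rintro ⟨x, hx, hMx⟩
    refine ⟨x, hx, ?_⟩
    have h1 : ftcP n L U (1 - lam⁻¹) (2 * n - 2)
        *ᵥ (((1 - (1 - lam⁻¹) • L.map Complex.ofReal)
          * (1 - (1 - lam⁻¹) • U.map Complex.ofReal)) *ᵥ x) = x := by
      rw [Matrix.mulVec_mulVec, hTM0, Matrix.one_mulVec]
    rw [hMx, Matrix.mulVec_smul] at h1
    calc ftcP n L U (1 - lam⁻¹) (2 * n - 2) *ᵥ x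
        = lam • (lam⁻¹ • (ftcP n L U (1 - lam⁻¹) (2 * n - 2) *ᵥ x)) := by
          rw [smul_smul, mul_inv_cancel₀ hlam, one_smul]
      _ = lam • x := by rw [h1]

end EigTransfer

/-- Spectrum-equivalence of the FTC-method, given by the splitting
`{L_c^{(1)}, …, L_c^{(n-1)}, U_c^{(n)}, …, U_c^{(2)}}` of order `2n - 2`, and
the symmetric Gauss–Seidel method, whose iteration matrix is
`(I - U)⁻¹ L (I - L)⁻¹ U`: they have the same nonzero eigenvalues. -/
theorem FTC_spectrum_equiv_symmetric_GaussSeidel (n : ℕ) (hn : 2 ≤ n)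
    (L U : Matrix (Fin n) (Fin n) ℝ)
    (hL : ∀ i j : Fin n, i ≤ j → L i j = 0)
    (hU : ∀ i j : Fin n, j ≤ i → U i j = 0) :
    ∀ lam : ℂ, lam ≠ 0 →
      (lam ∈ spectrum ℂ (iterMatC (fun p : Fin (2 * n - 2) =>
          if h : p.val < n - 1 then Lc L ⟨p.val, by omega⟩
          else Uc U ⟨n - 1 - (p.val - (n - 1)), by omega⟩)) ↔
        lam ∈ spectrum ℂ
          ((1 - U.map Complex.ofReal)⁻¹ * L.map Complex.ofReal *
            (1 - L.map Complex.ofReal)⁻¹ * U.map Complex.ofReal)) := by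
  intro lam hlam
  set Bs : Fin (2 * n - 2) → Matrix (Fin n) (Fin n) ℝ := fun p =>
      if h : p.val < n - 1 then Lc L ⟨p.val, by omega⟩
      else Uc U ⟨n - 1 - (p.val - (n - 1)), by omega⟩ with hBsdef
  have hBs : ∀ p : Fin (2 * n - 2), (Bs p).map Complex.ofReal = ftcC n L U p.val := by
    intro p
    by_cases h : (p : ℕ) < n - 1
    · simp only [hBsdef]
      rw [dif_pos h, ftcC, dif_pos h]
    · simp only [hBsdef]
      rw [dif_neg h, ftcC, dif_neg h, dif_pos p.isLt]
      have hfin : (⟨n - 1 - ((p : ℕ) - (n - 1)), by omega⟩ : Fin n)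
          = ⟨2 * n - 2 - (p : ℕ), by omega⟩ := Fin.mk_eq_mk.mpr (by omega)
      rw [hfin]
  -- block triangularity facts
  have hblockL0 : ∀ pi qj : Fin (2 * n - 2) × Fin n,
      ¬ ((qj.1 : ℕ) < (pi.1 : ℕ)) → blockL Bs pi qj = 0 := by
    intro pi qj h
    simp only [blockL, Matrix.of_apply]
    rw [if_neg]
    intro hc
    exact h (Fin.lt_def.mp hc)
  have hLunitR : IsUnit (1 - blockL Bs) :=
    isUnit_one_sub_of_strict _ (fun z : Fin (2 * n - 2) × Fin n => (z.1 : ℕ)) hblockL0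
  have hLdetC : (1 - (blockL Bs).map Complex.ofReal).det ≠ 0 :=
    det_one_sub_ne_zero_of_strict _ (fun z : Fin (2 * n - 2) × Fin n => (z.1 : ℕ))
      (by intro pi qj h; rw [Matrix.map_apply, hblockL0 pi qj h, Complex.ofReal_zero])
  have hLtdet : (1 - L.map Complex.ofReal).det ≠ 0 :=
    det_one_sub_ne_zero_of_strict _ (fun i : Fin n => (i : ℕ))
      (by intro i j h
          have h' : ¬ ((j : ℕ) < (i : ℕ)) := h
          rw [Matrix.map_apply, hL i j (Fin.le_def.mpr (by omega)), Complex.ofReal_zero])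
  have hUtdet : (1 - U.map Complex.ofReal).det ≠ 0 :=
    det_one_sub_ne_zero_of_strict _ (fun i : Fin n => n - (i : ℕ))
      (by intro i j h
          have h' : ¬ (n - (j : ℕ) < n - (i : ℕ)) := h
          rw [Matrix.map_apply, hU i j (Fin.le_def.mpr (by omega)), Complex.ofReal_zero])
  -- left reduction
  have hiterC : (1 - (blockL Bs).map Complex.ofReal) * iterMatC Bs
      = (blockU Bs).map Complex.ofReal := by
    rw [iterMatC, iterMat, mapC_mul, ← mapC_one_sub, ← mul_assoc, ← mapC_mul,
      Matrix.mul_nonsing_inv _ ((Matrix.isUnit_iff_isUnit_det _).mp hLunitR),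
      Matrix.map_one _ Complex.ofReal_zero Complex.ofReal_one, one_mul]
  have hML : (1 - (blockL Bs).map Complex.ofReal) * (lam • 1 - iterMatC Bs)
      = lam • (1 - (blockL Bs).map Complex.ofReal) - (blockU Bs).map Complex.ofReal := by
    rw [mul_sub, Matrix.mul_smul, mul_one, hiterC]
  have hLiff : (lam • 1 - iterMatC Bs).det = 0
      ↔ (lam • (1 - (blockL Bs).map Complex.ofReal)
          - (blockU Bs).map Complex.ofReal).det = 0 := by
    constructor
    · intro h
      rw [← hML, Matrix.det_mul, h, mul_zero]
    · intro h
      rw [← hML, Matrix.det_mul] at h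
      exact (mul_eq_zero.mp h).resolve_left hLdetC
  -- right reduction
  have hUU : (1 - U.map Complex.ofReal) * (1 - U.map Complex.ofReal)⁻¹ = 1 :=
    Matrix.mul_nonsing_inv _ (isUnit_iff_ne_zero.mpr hUtdet)
  have hLL : (1 - L.map Complex.ofReal) * (1 - L.map Complex.ofReal)⁻¹ = 1 :=
    Matrix.mul_nonsing_inv _ (isUnit_iff_ne_zero.mpr hLtdet)
  have hcomm : (1 - L.map Complex.ofReal) * L.map Complex.ofReal
      = L.map Complex.ofReal * (1 - L.map Complex.ofReal) := by noncomm_ring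
  have hprod : ((1 - L.map Complex.ofReal) * (1 - U.map Complex.ofReal))
      * ((1 - U.map Complex.ofReal)⁻¹ * L.map Complex.ofReal
          * (1 - L.map Complex.ofReal)⁻¹ * U.map Complex.ofReal)
      = L.map Complex.ofReal * U.map Complex.ofReal := by
    simp only [mul_assoc]
    rw [← mul_assoc (1 - U.map Complex.ofReal) (1 - U.map Complex.ofReal)⁻¹, hUU, one_mul,
      ← mul_assoc (1 - L.map Complex.ofReal) (L.map Complex.ofReal), hcomm,
      mul_assoc (L.map Complex.ofReal) (1 - L.map Complex.ofReal),
      ← mul_assoc (1 - L.map Complex.ofReal) (1 - L.map Complex.ofReal)⁻¹, hLL, one_mul]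
  have hprodet : ((1 - L.map Complex.ofReal) * (1 - U.map Complex.ofReal)).det ≠ 0 := by
    rw [Matrix.det_mul]
    exact mul_ne_zero hLtdet hUtdet
  have hMR : ((1 - L.map Complex.ofReal) * (1 - U.map Complex.ofReal))
      * (lam • 1 - ((1 - U.map Complex.ofReal)⁻¹ * L.map Complex.ofReal
          * (1 - L.map Complex.ofReal)⁻¹ * U.map Complex.ofReal))
      = lam • ((1 - L.map Complex.ofReal) * (1 - U.map Complex.ofReal))
          - L.map Complex.ofReal * U.map Complex.ofReal := by
    rw [mul_sub, Matrix.mul_smul, mul_one, hprod]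
  have hRiff : (lam • 1 - ((1 - U.map Complex.ofReal)⁻¹ * L.map Complex.ofReal
          * (1 - L.map Complex.ofReal)⁻¹ * U.map Complex.ofReal)).det = 0
      ↔ (lam • ((1 - L.map Complex.ofReal) * (1 - U.map Complex.ofReal))
          - L.map Complex.ofReal * U.map Complex.ofReal).det = 0 := by
    constructor
    · intro h
      rw [← hMR, Matrix.det_mul, h, mul_zero]
    · intro h
      rw [← hMR, Matrix.det_mul] at h
      exact (mul_eq_zero.mp h).resolve_left hprodet
  rw [spec_iff_det, spec_iff_det, hLiff, hRiff, ← Matrix.exists_mulVec_eq_zero_iff]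
  -- kernel to block system
  have hker : (∃ v, v ≠ 0 ∧ (lam • (1 - (blockL Bs).map Complex.ofReal)
        - (blockU Bs).map Complex.ofReal) *ᵥ v = 0)
      ↔ (∃ a : ℕ → Fin n → ℂ, (∃ p, p < 2 * n - 2 ∧ a p ≠ 0) ∧ RowSys n L U lam a) := by
    constructor
    · rintro ⟨α, hα, hα0⟩
      refine ⟨vaF α, ?_, (unpack_lemma L U lam Bs hBs α).mp hα0⟩
      obtain ⟨pi, hpi⟩ := Function.ne_iff.mp hα
      refine ⟨(pi.1 : ℕ), pi.1.isLt, ?_⟩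
      intro hz
      apply hpi
      have hv : vaF α (pi.1 : ℕ) pi.2 = α pi := by
        rw [vaF, dif_pos pi.1.isLt, Fin.eta, Prod.mk.eta]
      rw [← hv, hz]
      rfl
    · rintro ⟨a, ⟨p0, hp0, hap0⟩, hrow⟩
      refine ⟨fun qj => a (qj.1 : ℕ) qj.2, ?_, ?_⟩
      · obtain ⟨j, hj⟩ := Function.ne_iff.mp hap0
        exact Function.ne_iff.mpr ⟨(⟨p0, hp0⟩, j), by simpa using hj⟩
      · apply (unpack_lemma L U lam Bs hBs _).mpr
        have hagree : ∀ q, q < 2 * n - 2 →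
            vaF (fun qj : Fin (2 * n - 2) × Fin n => a (qj.1 : ℕ) qj.2) q = a q := by
          intro q hq
          funext j
          rw [vaF, dif_pos hq]
        intro p hp
        rw [hagree p hp,
          Finset.sum_congr rfl (fun q hq => by rw [hagree q (Finset.mem_range.mp hq)])]
        exact hrow p hp
  rw [hker, sys_iff L U lam hn hlam]
  by_cases hlam1 : lam = 1
  · subst hlam1
    rw [lam_one_iff L U hn hL hU]
    have hG0 : (1 : ℂ) • ((1 - L.map Complex.ofReal) * (1 - U.map Complex.ofReal))
        - L.map Complex.ofReal * U.map Complex.ofReal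
        = 1 - (L.map Complex.ofReal + U.map Complex.ofReal) := by
      rw [one_smul]
      noncomm_ring
    rw [hG0, ← Matrix.exists_mulVec_eq_zero_iff]
    apply exists_congr
    intro x
    constructor
    · rintro ⟨hx, hfix⟩
      exact ⟨hx, by rw [Matrix.sub_mulVec, Matrix.one_mulVec, hfix, sub_self]⟩
    · rintro ⟨hx, h⟩
      refine ⟨hx, ?_⟩
      rw [Matrix.sub_mulVec, Matrix.one_mulVec, sub_eq_zero] at h
      exact h.symm
  · have hstep1 : (∃ a : ℕ → Fin n → ℂ, a 0 ≠ 0 ∧ RecSys n L U lam a ∧ Row0 n L U lam a)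
        ↔ (∃ x, x ≠ 0 ∧ ftcP n L U (1 - lam⁻¹) (2 * n - 2) *ᵥ x = lam • x) := by
      constructor
      · rintro ⟨a, h1, h2, h3⟩
        exact recrow_to_T L U lam hn hlam a h1 h2 h3
      · rintro ⟨x, h1, h2⟩
        exact T_to_recrow L U lam hn hlam hlam1 x h1 h2
    rw [hstep1, eig_T_iff_M0 L U lam hn hlam hL hU, eig_iff_det' _ lam⁻¹,
      det_scaled_iff lam (L.map Complex.ofReal) (U.map Complex.ofReal) hlam hlam1]

end FTCproof
end
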